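/- arXiv:1502.08050 — 9 statements merged into one kernel-verified Lean document; each statement's English description precedes it below -/
import Mathlib

section
/- Let v_L be a positive integer and L = (L_1, …, L_{v_L}) a vector of non-negative integers, and set v_R = 1 + Σ_{i=1}^{v_L} L_i. Then the number T(L) of trees in 𝒢(L) equals ((v_R − 1)! / Π_{i=1}^{v_L} L_i!) · v_R^{v_L − 1}. -/
/-- A graph on a sum type is bipartite with respect to the two summands:
no edges within `V_L` and no edges within `V_R`. -/
def IsBipartiteSum {α β : Type*} (G : SimpleGraph (α ⊕ β)) : Prop :=
  (∀ a a' : α, ¬ G.Adj (Sum.inl a) (Sum.inl a')) ∧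
  (∀ b b' : β, ¬ G.Adj (Sum.inr b) (Sum.inr b'))

/-- The degree of a vertex, as the cardinality of its neighbor set. -/
noncomputable def deg {V : Type*} (G : SimpleGraph V) (v : V) : ℕ :=
  (G.neighborSet v).ncard

/-!
Let `c` be a 2-colouring of a finite vertex set and `d v` the prescribed excess `deg v - 1`,
subject to `∑_{c v ≠ k} d v + 1 = #{c = k}` for both colours `k` (the paper's
`v_R = 1 + ∑ L_i`, imposed on both sides). Then the number `N(d)` of trees properly coloured by
`c` with these degrees satisfies `N(d) · ∏ (d v)! = ∏_k (#{c = k} - 1)!`.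
Induct on the number of vertices: the constraint gives `∑ d = |V| - 2`, so some `d y = 0`, i.e.
`y` is a leaf. Deleting it matches the trees with the pairs (neighbour `x` of the other colour,
tree on `V ∖ {y}` with `d x` lowered by one), so `N(d) = ∑_x N(d - e_x)`, and
`∑_x d x = #{c = c y} - 1` closes the induction.
In the theorem the right degrees `r_j + 1` are free subject to `∑ r_j = v_L - 1`; summing
`(v_R - 1)! (v_L - 1)! / (∏ L_i! ∏ r_j!)` over them gives `(v_R - 1)! / ∏ L_i! · v_R ^ (v_L - 1)`
by the multinomial theorem.
-/

open Finset SimpleGraph Nat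

variable {V : Type*}

section Degree

lemma deg_eq_degree (G : SimpleGraph V) (v : V) [Fintype (G.neighborSet v)] :
    deg G v = G.degree v := by
  rw [deg, Set.ncard_eq_toFinset_card', ← card_neighborSet_eq_degree, Set.toFinset_card]

lemma sum_deg_eq_two_mul_card_edgeSet [Fintype V] (G : SimpleGraph V) :
    ∑ v, deg G v = 2 * Nat.card G.edgeSet := by
  classical
  simp only [deg_eq_degree, sum_degrees_eq_twice_card_edges, Nat.card_eq_fintype_card,
    edgeFinset_card]

lemma isTree_iff_connected_and_sum_deg [Fintype V] {G : SimpleGraph V} :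
    G.IsTree ↔ G.Connected ∧ ∑ v, deg G v + 2 = 2 * Fintype.card V := by
  rw [isTree_iff_connected_and_card, sum_deg_eq_two_mul_card_edgeSet,
    Nat.card_eq_fintype_card (α := V)]
  exact and_congr_right fun _ ↦ by omega

lemma SimpleGraph.Connected.deg_pos [Finite V] [Nontrivial V] {G : SimpleGraph V}
    (h : G.Connected) (v : V) : 0 < deg G v := by
  obtain ⟨w, hw⟩ := exists_ne v
  exact (Set.ncard_pos (Set.toFinite _)).2
    ((h.preconnected v w).nonempty_neighborSet_left hw.symm)

end Degree

section ComplSingleton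

lemma ncard_preimage_compl_singleton_add [Finite V] (y : V) (S : Set V) [Decidable (y ∈ S)] :
    (((↑) : ({y}ᶜ : Set V) → V) ⁻¹' S).ncard + (if y ∈ S then 1 else 0) = S.ncard := by
  have hpre : ((↑) : ({y}ᶜ : Set V) → V) ⁻¹' S = (↑) ⁻¹' (S \ {y}) := by
    ext u
    simp
  rw [hpre, Set.ncard_preimage_of_injective_subset_range Subtype.val_injective
    fun v hv ↦ ⟨⟨v, hv.2⟩, rfl⟩]
  split_ifs with hy
  · exact Set.ncard_sdiff_singleton_add_one hy
  · rw [Set.sdiff_singleton_eq_self hy, add_zero]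

variable [Fintype V] [DecidableEq V]

@[to_additive]
lemma prod_compl_singleton_mul {M : Type*} [CommMonoid M] (f : V → M) (y : V) :
    (∏ v : ({y}ᶜ : Set V), f v) * f y = ∏ v, f v := by
  rw [Fintype.prod_eq_prod_compl_mul y]
  exact congrArg (· * f y) (Finset.prod_subtype _ (by simp) f).symm

lemma card_compl_singleton_add_one (y : V) :
    Fintype.card ({y}ᶜ : Set V) + 1 = Fintype.card V := by
  simpa only [Fintype.card_eq_sum_ones] using sum_compl_singleton_add (fun _ ↦ (1 : ℕ)) y

lemma sum_filter_compl_singleton_add {M : Type*} [AddCommMonoid M] (p : V → Prop)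
    [DecidablePred p] (f : V → M) (y : V) :
    ∑ u ∈ {u : ({y}ᶜ : Set V) | p u}, f u + (if p y then f y else 0) = ∑ v with p v, f v := by
  rw [Finset.sum_filter, Finset.sum_filter, ← sum_compl_singleton_add _ y]

lemma card_filter_compl_singleton_add (p : V → Prop) [DecidablePred p] (y : V) :
    #{u : ({y}ᶜ : Set V) | p u} + (if p y then 1 else 0) = #{v | p v} := by
  simpa only [Finset.card_eq_sum_ones] using sum_filter_compl_singleton_add p (fun _ ↦ 1) y

end ComplSingleton

section Update

variable {ι : Type*} [DecidableEq ι] {g : ι → ℕ} {x : ι}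

lemma sum_update_pred_add (hx : g x ≠ 0) (s : Finset ι) :
    ∑ u ∈ s, Function.update g x (g x - 1) u + (if x ∈ s then 1 else 0) = ∑ u ∈ s, g u := by
  split_ifs with hxs
  · rw [Finset.sum_update_of_mem hxs, ← Finset.add_sum_erase s g hxs,
      Finset.sdiff_singleton_eq_erase]
    omega
  · rw [Finset.sum_update_of_notMem hxs, add_zero]

lemma prod_factorial_eq_mul_prod_factorial_update_pred [Fintype ι] (hx : g x ≠ 0) :
    ∏ u, (g u)! = g x * ∏ u, (Function.update g x (g x - 1) u)! := by
  rw [Fintype.prod_eq_mul_prod_compl x, Fintype.prod_eq_mul_prod_compl x, Function.update_self,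
    ← mul_assoc, Nat.mul_factorial_pred hx]
  congr 1
  exact Finset.prod_congr rfl fun u hu ↦ by rw [Function.update_of_ne (by simpa using hu)]

end Update

section Leaf

variable (y : V)

def addLeaf (H : SimpleGraph ({y}ᶜ : Set V)) (x : ({y}ᶜ : Set V)) : SimpleGraph V :=
  H.map (Function.Embedding.subtype _) ⊔ edge y x

variable {y} {H : SimpleGraph ({y}ᶜ : Set V)} {x : ({y}ᶜ : Set V)}

lemma addLeaf_adj_leaf (v : V) : (addLeaf y H x).Adj y v ↔ v = x := by
  have hx : (x : V) ≠ y := x.2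
  simp only [addLeaf, sup_adj, map_adj, Function.Embedding.subtype_apply, edge_adj]
  constructor
  · rintro (⟨u, -, -, hu, -⟩ | ⟨⟨-, rfl⟩ | ⟨h, -⟩, -⟩)
    · exact absurd hu u.2
    · rfl
    · exact absurd h.symm hx
  · rintro rfl
    exact Or.inr ⟨by simp, hx.symm⟩

lemma addLeaf_adj_coe (u v : ({y}ᶜ : Set V)) : (addLeaf y H x).Adj u v ↔ H.Adj u v := by
  simp only [addLeaf, sup_adj, map_adj, Function.Embedding.subtype_apply, edge_adj]
  constructor
  · rintro (⟨u', v', h, hu, hv⟩ | ⟨⟨h, -⟩ | ⟨-, h⟩, -⟩)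
    · rwa [← Subtype.ext hu, ← Subtype.ext hv]
    · exact absurd h u.2
    · exact absurd h v.2
  · exact fun h ↦ Or.inl ⟨u, v, h, rfl, rfl⟩

lemma induce_addLeaf : (addLeaf y H x).induce {y}ᶜ = H := by
  ext u v
  exact addLeaf_adj_coe u v

lemma neighborSet_addLeaf_leaf : (addLeaf y H x).neighborSet y = {(x : V)} := by
  ext v
  exact addLeaf_adj_leaf v

lemma addLeaf_induce {G : SimpleGraph V} (h : G.neighborSet y = {(x : V)}) :
    addLeaf y (G.induce {y}ᶜ) x = G := by
  have hleaf (v) : G.Adj y v ↔ v = x := by rw [← mem_neighborSet, h, Set.mem_singleton_iff]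
  ext a b
  rcases eq_or_ne a y with rfl | ha
  · rw [addLeaf_adj_leaf, hleaf]
  rcases eq_or_ne b y with rfl | hb
  · rw [adj_comm, addLeaf_adj_leaf, adj_comm, hleaf]
  exact addLeaf_adj_coe (u := ⟨a, ha⟩) (v := ⟨b, hb⟩)

lemma exists_neighborSet_eq_singleton {G : SimpleGraph V} (h : deg G y = 1) :
    ∃ x : ({y}ᶜ : Set V), G.neighborSet y = {(x : V)} := by
  obtain ⟨z, hz⟩ := Set.ncard_eq_one.1 h
  have hzy : z ≠ y := (G.ne_of_adj (show z ∈ G.neighborSet y by simp [hz])).symm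
  exact ⟨⟨z, hzy⟩, hz⟩

lemma addLeaf_injective {H' : SimpleGraph ({y}ᶜ : Set V)} {x' : ({y}ᶜ : Set V)}
    (h : addLeaf y H x = addLeaf y H' x') : H = H' ∧ x = x' := by
  refine ⟨by rw [← induce_addLeaf (H := H) (x := x), h, induce_addLeaf], Subtype.ext ?_⟩
  have := neighborSet_addLeaf_leaf (H := H) (x := x)
  rwa [h, neighborSet_addLeaf_leaf, Set.singleton_eq_singleton_iff, eq_comm] at this

lemma deg_addLeaf_leaf : deg (addLeaf y H x) y = 1 := by
  rw [deg, neighborSet_addLeaf_leaf, Set.ncard_singleton]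

lemma deg_addLeaf_coe [Finite V] [DecidableEq V] (u : ({y}ᶜ : Set V)) :
    deg (addLeaf y H x) u = deg H u + if u = x then 1 else 0 := by
  classical
  have hpre : ((↑) : ({y}ᶜ : Set V) → V) ⁻¹' (addLeaf y H x).neighborSet u =
      H.neighborSet u := by
    ext v
    exact addLeaf_adj_coe u v
  have hy : y ∈ (addLeaf y H x).neighborSet u ↔ u = x := by
    rw [mem_neighborSet, adj_comm, addLeaf_adj_leaf, Subtype.ext_iff]
  rw [deg, ← ncard_preimage_compl_singleton_add y, hpre, deg]
  simp only [hy]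

lemma sum_deg_addLeaf [Fintype V] [DecidableEq V] :
    ∑ v, deg (addLeaf y H x) v = ∑ u, deg H u + 2 := by
  rw [← sum_compl_singleton_add _ y, deg_addLeaf_leaf]
  simp only [deg_addLeaf_coe, Finset.sum_add_distrib, Finset.sum_ite_eq', Finset.mem_univ,
    if_true]

lemma connected_addLeaf_iff [Finite V] : (addLeaf y H x).Connected ↔ H.Connected := by
  classical
  have := Fintype.ofFinite V
  constructor
  · intro hG
    have hdeg : (addLeaf y H x).degree y = 1 :=
      degree_eq_one_iff_existsUnique_adj.2 ⟨x, (addLeaf_adj_leaf _).2 rfl,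
        fun v ↦ (addLeaf_adj_leaf v).1⟩
    simpa only [induce_addLeaf] using hG.induce_compl_singleton_of_degree_eq_one hdeg
  · intro hH
    let f : H →g addLeaf y H x := ⟨(↑), (addLeaf_adj_coe _ _).2⟩
    refine (connected_iff_exists_forall_reachable _).2 ⟨x, fun w ↦ ?_⟩
    rcases eq_or_ne w y with rfl | hw
    · exact ((addLeaf_adj_leaf _).2 rfl).reachable.symm
    · exact (hH.preconnected x ⟨w, hw⟩).map f

lemma isTree_addLeaf_iff [Fintype V] [DecidableEq V] : (addLeaf y H x).IsTree ↔ H.IsTree := by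
  rw [isTree_iff_connected_and_sum_deg, isTree_iff_connected_and_sum_deg, connected_addLeaf_iff,
    sum_deg_addLeaf, ← card_compl_singleton_add_one y]
  exact and_congr_right fun _ ↦ by omega

end Leaf

section ColoredTrees

def coloredTrees (c : V → Bool) (d : V → ℕ) : Set (SimpleGraph V) :=
  {G | G.IsTree ∧ (∀ u v, G.Adj u v → c u ≠ c v) ∧ ∀ v, deg G v = d v + 1}

/-- The excesses `deg - 1` of `T - y`, where `T` has excesses `d` and `y` is a leaf of `T`
attached at `x`. -/
def restrictPredAt [DecidableEq V] (d : V → ℕ) {y : V} (x : ({y}ᶜ : Set V)) :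
    ({y}ᶜ : Set V) → ℕ :=
  Function.update (fun u ↦ d u) x (d x - 1)

variable [Fintype V] [DecidableEq V] {c : V → Bool} {d : V → ℕ} {y : V}

lemma addLeaf_mem_coloredTrees_iff (hy : d y = 0) [Nontrivial ({y}ᶜ : Set V)]
    {H : SimpleGraph ({y}ᶜ : Set V)} {x : ({y}ᶜ : Set V)} :
    addLeaf y H x ∈ coloredTrees c d ↔ c x ≠ c y ∧ d x ≠ 0 ∧
      H ∈ coloredTrees (fun u : ({y}ᶜ : Set V) ↦ c u) (restrictPredAt d x) := by
  constructor
  · rintro ⟨hT, hc, hd⟩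
    have hH : H.IsTree := isTree_addLeaf_iff.1 hT
    have hdeg (u) : deg H u + (if u = x then 1 else 0) = d u + 1 :=
      (deg_addLeaf_coe u).symm.trans (hd u)
    have hdx : d x ≠ 0 := by
      have := hdeg x
      have := hH.connected.deg_pos x
      simp only [if_true] at *
      omega
    refine ⟨(hc y x ((addLeaf_adj_leaf _).2 rfl)).symm, hdx, hH,
      fun u v h ↦ hc u v ((addLeaf_adj_coe u v).2 h), fun u ↦ ?_⟩
    have := hdeg u
    rcases eq_or_ne u x with rfl | hu
    · simp only [restrictPredAt, if_true, Function.update_self] at *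
      omega
    · simp only [restrictPredAt, hu, if_false, Function.update_of_ne hu] at *
      omega
  · rintro ⟨hcx, hdx, hT, hc, hd⟩
    refine ⟨isTree_addLeaf_iff.2 hT, fun a b hab ↦ ?_, fun v ↦ ?_⟩
    · rcases eq_or_ne a y with rfl | ha
      · rw [(addLeaf_adj_leaf b).1 hab]
        exact hcx.symm
      rcases eq_or_ne b y with rfl | hb
      · rw [(addLeaf_adj_leaf a).1 hab.symm]
        exact hcx
      exact hc ⟨a, ha⟩ ⟨b, hb⟩ ((addLeaf_adj_coe ⟨a, ha⟩ ⟨b, hb⟩).1 hab)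
    · rcases eq_or_ne v y with rfl | hv
      · rw [deg_addLeaf_leaf, hy]
      have := hd ⟨v, hv⟩
      rw [deg_addLeaf_coe ⟨v, hv⟩]
      rcases eq_or_ne (⟨v, hv⟩ : ({y}ᶜ : Set V)) x with rfl | hvx
      · simp only [restrictPredAt, if_true, Function.update_self] at *
        omega
      · simp only [restrictPredAt, hvx, if_false, Function.update_of_ne hvx] at *
        exact this

lemma card_coloredTrees_eq_sum (hy : d y = 0) [Nontrivial ({y}ᶜ : Set V)] :
    Nat.card (coloredTrees c d) = ∑ x : {x : ({y}ᶜ : Set V) // c x ≠ c y ∧ d x ≠ 0},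
      Nat.card (coloredTrees (fun u : ({y}ᶜ : Set V) ↦ c u) (restrictPredAt d x.1)) := by
  rw [← Nat.card_sigma]
  refine (Nat.card_eq_of_bijective (fun p ↦ ⟨addLeaf y p.2.1 p.1,
    (addLeaf_mem_coloredTrees_iff hy).2 ⟨p.1.2.1, p.1.2.2, p.2.2⟩⟩) ⟨?_, ?_⟩).symm
  · rintro ⟨x, H, hH⟩ ⟨x', H', hH'⟩ h
    obtain ⟨rfl, hx⟩ := addLeaf_injective (congrArg Subtype.val h)
    obtain rfl := Subtype.ext hx
    rfl
  · rintro ⟨G, hG⟩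
    obtain ⟨x, hx⟩ := exists_neighborSet_eq_singleton ((hG.2.2 y).trans (by rw [hy]))
    have hG' := hG
    rw [← addLeaf_induce hx] at hG'
    obtain ⟨hcx, hdx, hH⟩ := (addLeaf_mem_coloredTrees_iff hy).1 hG'
    exact ⟨⟨⟨x, hcx, hdx⟩, _, hH⟩, Subtype.ext (addLeaf_induce hx)⟩

end ColoredTrees

section Count

variable [Fintype V] {c : V → Bool} {d : V → ℕ}

lemma sum_add_two_eq_card (hd : ∀ k, ∑ v with c v ≠ k, d v + 1 = #{v | c v = k}) :
    ∑ v, d v + 2 = Fintype.card V := by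
  have h1 := hd true
  have h2 := hd false
  rw [← Finset.sum_filter_add_sum_filter_not univ (fun v ↦ c v = true), ← Finset.card_univ,
    ← Finset.card_filter_add_card_filter_not (fun v ↦ c v = true)]
  simp only [ne_eq, Bool.not_eq_true, Bool.not_eq_false] at h1 h2 ⊢
  omega

lemma exists_eq_zero_of_sum_lt_card (h : ∑ v, d v < Fintype.card V) : ∃ y, d y = 0 := by
  obtain ⟨y, -, hy⟩ := Finset.exists_lt_of_sum_lt (s := univ) (f := d) (g := fun _ ↦ 1)
    (by rwa [← Fintype.card_eq_sum_ones])
  exact ⟨y, by omega⟩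

lemma coloredTrees_zero_eq_singleton_top [DecidableEq V] (hc : ∀ k, #{v | c v = k} = 1) :
    coloredTrees c (fun _ ↦ 0) = {⊤} := by
  have hinj : Function.Injective c := fun u v huv ↦
    Finset.card_le_one.1 (hc (c u)).le u (by simp) v (by simp [huv])
  have hcard : Fintype.card V = 2 := by
    rw [← Finset.card_univ, ← Finset.card_filter_add_card_filter_not (fun v ↦ c v = true)]
    simp only [Bool.not_eq_true, hc]
  have : Nonempty V := Fintype.card_pos_iff.1 (by omega)
  refine Set.eq_singleton_iff_unique_mem.2 ⟨⟨⟨connected_top, IsAcyclic.of_card_le_two ?_⟩,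
    fun u v huv ↦ hinj.ne huv, fun v ↦ ?_⟩, fun G hG ↦ ?_⟩
  · simp [ENat.card_eq_coe_fintype_card, hcard]
  · rw [deg_eq_degree, complete_graph_degree, hcard]
  · ext u v
    refine ⟨G.ne_of_adj, fun huv ↦ ?_⟩
    obtain ⟨w, hw⟩ : (G.neighborSet u).Nonempty :=
      Set.nonempty_of_ncard_ne_zero (by rw [← deg, hG.2.2 u]; simp)
    have hcw := hG.2.1 u w hw
    have hcv := hinj.ne huv
    -- with two colours, `c w ≠ c u` and `c v ≠ c u` force `c w = c v`
    have : w = v := hinj (by revert hcw hcv; cases c u <;> cases c v <;> cases c w <;> simp)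
    exact this ▸ hw

lemma nontrivial_compl_singleton (hd : ∀ k, ∑ v with c v ≠ k, d v + 1 = #{v | c v = k})
    {y : V} (hb : 2 ≤ #{v | c v = c y}) : Nontrivial ({y}ᶜ : Set V) := by
  obtain ⟨y', hy', hy'y⟩ := Finset.exists_mem_ne hb y
  obtain ⟨x, hx⟩ : ({v | c v = !c y} : Finset V).Nonempty := by
    rw [← Finset.card_pos, ← hd]
    omega
  simp only [Finset.mem_filter, Finset.mem_univ, true_and] at hx hy'
  refine ⟨⟨x, ?_⟩, ⟨y', hy'y⟩, fun h ↦ ?_⟩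
  · rintro rfl
    simp at hx
  · have := congrArg (fun u : ({y}ᶜ : Set V) ↦ c u) h
    simp [hx, hy'] at this

variable [DecidableEq V] {y : V} {x : ({y}ᶜ : Set V)}

lemma card_coloredTrees_mul_prod_factorial_of_card_eq_one
    (hd : ∀ k, ∑ v with c v ≠ k, d v + 1 = #{v | c v = k}) (hy : d y = 0)
    (hb : #{v | c v = c y} = 1) :
    Nat.card (coloredTrees c d) * ∏ v, (d v)! = ∏ k, (#{v | c v = k} - 1)! := by
  have hclass : ({v | c v = c y} : Finset V) = {y} := Finset.eq_singleton_iff_unique_mem.2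
    ⟨by simp, fun v hv ↦ Finset.card_le_one.1 hb.le v hv y (by simp)⟩
  have hother := hd (!c y)
  simp only [Bool.not_eq_not, hclass, Finset.sum_singleton, hy] at hother
  have hc (k) : #{v | c v = k} = 1 := by
    rcases Bool.eq_or_eq_not k (c y) with rfl | rfl
    exacts [hb, hother.symm]
  have hd0 : d = fun _ ↦ 0 := by
    have h := hd (c y)
    rw [hb, Nat.add_eq_right, Finset.sum_eq_zero_iff] at h
    funext v
    by_cases hv : c v = c y
    · have hvy : v ∈ ({v | c v = c y} : Finset V) := by simpa using hv
      rw [hclass, Finset.mem_singleton] at hvy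
      rw [hvy, hy]
    · exact h v (by simpa using hv)
  subst hd0
  simp [coloredTrees_zero_eq_singleton_top hc, hc]

lemma sum_restrictPredAt_add_one (hd : ∀ k, ∑ v with c v ≠ k, d v + 1 = #{v | c v = k})
    (hy : d y = 0) (hcx : c x ≠ c y) (hdx : d x ≠ 0) (k : Bool) :
    ∑ u ∈ {u : ({y}ᶜ : Set V) | c u ≠ k}, restrictPredAt d x u + 1 =
      #{u : ({y}ᶜ : Set V) | c u = k} := by
  have hupd := sum_update_pred_add (g := fun u : ({y}ᶜ : Set V) ↦ d u) hdx {u | c u ≠ k}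
  rw [← restrictPredAt] at hupd
  have hsum := sum_filter_compl_singleton_add (fun v ↦ c v ≠ k) d y
  have hcard := card_filter_compl_singleton_add (fun v ↦ c v = k) y
  have hk : c x ≠ k ↔ c y = k := by revert hcx; cases c x <;> cases c y <;> cases k <;> simp
  simp only [Finset.mem_filter, Finset.mem_univ, true_and, hk, hy, ite_self] at hupd hsum hcard
  have := hd k
  split_ifs at hupd hcard <;> omega

lemma prod_factorial_eq_mul_prod_factorial_restrictPredAt (hy : d y = 0) (hdx : d x ≠ 0) :
    ∏ v, (d v)! = d x * ∏ u, (restrictPredAt d x u)! := by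
  rw [← prod_compl_singleton_mul _ y, hy, factorial_zero, mul_one]
  exact prod_factorial_eq_mul_prod_factorial_update_pred (g := fun u : ({y}ᶜ : Set V) ↦ d u) hdx

lemma sum_subtype_ne_add_one (hd : ∀ k, ∑ v with c v ≠ k, d v + 1 = #{v | c v = k}) :
    ∑ x : {x : ({y}ᶜ : Set V) // c x ≠ c y ∧ d x ≠ 0}, d x + 1 = #{v | c v = c y} := by
  have hsum := sum_filter_compl_singleton_add (fun v ↦ c v ≠ c y) d y
  simp only [ne_eq, not_true_eq_false, if_false, add_zero] at hsum
  rw [← Finset.sum_subtype {x : ({y}ᶜ : Set V) | c x ≠ c y ∧ d x ≠ 0} (by simp)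
    (fun x ↦ d x), ← Finset.filter_filter, Finset.sum_filter_ne_zero]
  simpa only [ne_eq, hsum] using hd (c y)

lemma pred_mul_prod_factorial_card_compl_singleton (hb : 2 ≤ #{v | c v = c y}) :
    (#{v | c v = c y} - 1) * ∏ k, (#{u : ({y}ᶜ : Set V) | c u = k} - 1)! =
      ∏ k, (#{v | c v = k} - 1)! := by
  have hcard (k) := card_filter_compl_singleton_add (fun v ↦ c v = k) y
  rw [Fintype.prod_eq_mul_prod_compl (c y), Fintype.prod_eq_mul_prod_compl (c y), ← mul_assoc]
  congr 1
  · have := hcard (c y)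
    simp only [if_true] at this
    rw [← this, Nat.add_sub_cancel, Nat.mul_factorial_pred (by omega)]
  · refine Finset.prod_congr rfl fun k hk ↦ ?_
    have := hcard k
    rw [if_neg (by simpa [eq_comm] using hk), add_zero] at this
    rw [this]

end Count

theorem card_coloredTrees_mul_prod_factorial [Fintype V] [DecidableEq V] (c : V → Bool)
    (d : V → ℕ) (hd : ∀ k, ∑ v with c v ≠ k, d v + 1 = #{v | c v = k}) :
    Nat.card (coloredTrees c d) * ∏ v, (d v)! = ∏ k, (#{v | c v = k} - 1)! := by
  induction hn : Fintype.card V generalizing V with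
  | zero =>
    have := sum_add_two_eq_card hd
    omega
  | succ n ih =>
    have hsum := sum_add_two_eq_card hd
    obtain ⟨y, hy⟩ := exists_eq_zero_of_sum_lt_card (d := d) (by omega)
    obtain hb | hb : #{v | c v = c y} = 1 ∨ 2 ≤ #{v | c v = c y} := by
      have : 0 < #{v | c v = c y} := Finset.card_pos.2 ⟨y, by simp⟩
      omega
    · exact card_coloredTrees_mul_prod_factorial_of_card_eq_one hd hy hb
    have := nontrivial_compl_singleton hd hb
    have hn' : Fintype.card ({y}ᶜ : Set V) = n := by
      have := card_compl_singleton_add_one y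
      omega
    set R' := ∏ k, (#{u : ({y}ᶜ : Set V) | c u = k} - 1)!
    calc Nat.card (coloredTrees c d) * ∏ v, (d v)!
        = ∑ x : {x : ({y}ᶜ : Set V) // c x ≠ c y ∧ d x ≠ 0}, d x * R' := by
          rw [card_coloredTrees_eq_sum hy, Finset.sum_mul]
          refine Finset.sum_congr rfl fun ⟨x, hcx, hdx⟩ _ ↦ ?_
          rw [prod_factorial_eq_mul_prod_factorial_restrictPredAt hy hdx, mul_left_comm,
            ih _ _ (sum_restrictPredAt_add_one hd hy hcx hdx) hn']
      _ = (#{v | c v = c y} - 1) * R' := by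
          rw [← Finset.sum_mul, ← sum_subtype_ne_add_one hd, Nat.add_sub_cancel]
      _ = ∏ k, (#{v | c v = k} - 1)! := pred_mul_prod_factorial_card_compl_singleton hb

section Bipartite

variable {α β : Type*} {G : SimpleGraph (α ⊕ β)}

lemma isBipartiteSum_iff : IsBipartiteSum G ↔ ∀ u v, G.Adj u v → u.isLeft ≠ v.isLeft := by
  refine ⟨fun h ↦ ?_, fun h ↦ ⟨fun a a' hG ↦ h _ _ hG rfl, fun b b' hG ↦ h _ _ hG rfl⟩⟩
  rintro (a | b) (a' | b') hG
  exacts [absurd hG (h.1 a a'), by simp, by simp, absurd hG (h.2 b b')]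

lemma mem_coloredTrees_isLeft_iff {L : α → ℕ} {R : β → ℕ} :
    G ∈ coloredTrees Sum.isLeft (Sum.elim L R) ↔
      (IsBipartiteSum G ∧ (∀ a, deg G (.inl a) = L a + 1) ∧ G.IsTree) ∧
        ∀ b, deg G (.inr b) = R b + 1 := by
  simp only [coloredTrees, Set.mem_ofPred_eq, isBipartiteSum_iff, Sum.forall, Sum.elim_inl,
    Sum.elim_inr]
  tauto

variable [Fintype α] [Fintype β] {L : α → ℕ}

lemma card_filter_isLeft (k : Bool) :
    #{v : α ⊕ β | v.isLeft = k} = if k then Fintype.card α else Fintype.card β := by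
  cases k <;> simp only [Finset.card_filter, Fintype.sum_sum_type] <;> simp

lemma sum_deg_inr_sub_one (hL : ∑ a, L a + 1 = Fintype.card β)
    (hleft : ∀ a, deg G (.inl a) = L a + 1) (hT : G.IsTree) (hpos : ∀ b, 0 < deg G (.inr b)) :
    ∑ b, (deg G (.inr b) - 1) = Fintype.card α - 1 := by
  have hsum := (isTree_iff_connected_and_sum_deg.1 hT).2
  have hsub : ∑ b, (deg G (.inr b) - 1) + Fintype.card β = ∑ b, deg G (.inr b) := by
    rw [Fintype.card_eq_sum_ones, ← Finset.sum_add_distrib]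
    exact Finset.sum_congr rfl fun b _ ↦ Nat.sub_add_cancel (hpos b)
  rw [Fintype.sum_sum_type, Fintype.card_sum] at hsum
  simp only [hleft, Finset.sum_add_distrib, Finset.sum_const, Finset.card_univ, smul_eq_mul,
    mul_one] at hsum
  omega

variable [DecidableEq β]

lemma card_bipartiteTrees_eq_sum [Nonempty α] (hL : ∑ a, L a + 1 = Fintype.card β) :
    Nat.card {G : SimpleGraph (α ⊕ β) //
        IsBipartiteSum G ∧ (∀ a, deg G (.inl a) = L a + 1) ∧ G.IsTree} =
      ∑ r ∈ piAntidiag (univ : Finset β) (Fintype.card α - 1),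
        Nat.card (coloredTrees Sum.isLeft (Sum.elim L r)) := by
  obtain ⟨b₀⟩ : Nonempty β := Fintype.card_pos_iff.1 (by omega)
  have : Nontrivial (α ⊕ β) := ⟨⟨.inl (Classical.arbitrary α), .inr b₀, Sum.inl_ne_inr⟩⟩
  rw [← Finset.sum_coe_sort, ← Nat.card_sigma]
  refine (Nat.card_eq_of_bijective (fun p ↦ ⟨p.2.1, (mem_coloredTrees_isLeft_iff.1 p.2.2).1⟩)
    ⟨?_, ?_⟩).symm
  · rintro ⟨r, G, hG⟩ ⟨r', G', hG'⟩ h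
    obtain rfl : G = G' := congrArg Subtype.val h
    obtain rfl : r = r' := Subtype.ext <| funext fun b ↦ by
      have := (mem_coloredTrees_isLeft_iff.1 hG).2 b
      have := (mem_coloredTrees_isLeft_iff.1 hG').2 b
      omega
    rfl
  · rintro ⟨G, hG⟩
    have hpos (b : β) : 0 < deg G (.inr b) := hG.2.2.connected.deg_pos _
    refine ⟨⟨⟨fun b ↦ deg G (.inr b) - 1, ?_⟩, G,
      mem_coloredTrees_isLeft_iff.2 ⟨hG, fun b ↦ (Nat.sub_add_cancel (hpos b)).symm⟩⟩, rfl⟩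
    simpa [mem_piAntidiag] using sum_deg_inr_sub_one hL hG.2.1 hG.2.2 hpos

lemma sum_multinomial_eq_card_pow (n : ℕ) :
    ∑ r ∈ piAntidiag (univ : Finset β) n, Nat.multinomial univ r = Fintype.card β ^ n := by
  simpa using (Finset.sum_pow_eq_sum_piAntidiag (univ : Finset β) (fun _ ↦ (1 : ℕ)) n).symm

lemma card_coloredTrees_isLeft_mul_prod_factorial [DecidableEq α] [Nonempty α]
    (hL : ∑ a, L a + 1 = Fintype.card β) {r : β → ℕ} (hr : ∑ b, r b = Fintype.card α - 1) :
    Nat.card (coloredTrees Sum.isLeft (Sum.elim L r)) * ∏ a, (L a)! =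
      (Fintype.card β - 1)! * Nat.multinomial univ r := by
  have hα : 0 < Fintype.card α := Fintype.card_pos
  have h := card_coloredTrees_mul_prod_factorial Sum.isLeft (Sum.elim L r) fun k ↦ by
    cases k <;> simp only [Finset.card_filter, Finset.sum_filter, Fintype.sum_sum_type] <;>
      simp [hL, hr, Nat.sub_add_cancel hα]
  have hm := Nat.multinomial_spec univ r
  rw [hr] at hm
  simp only [Fintype.prod_sum_type, Sum.elim_inl, Sum.elim_inr, Fintype.prod_bool,
    card_filter_isLeft, if_true, Bool.false_eq_true, if_false] at h
  refine Nat.eq_of_mul_eq_mul_right (Finset.prod_pos fun b _ ↦ (r b).factorial_pos :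
    0 < ∏ b, (r b)!) ?_
  rw [mul_assoc, h, mul_assoc, mul_comm (Nat.multinomial _ _), hm]
  ring

theorem card_bipartiteTrees_mul_prod_factorial [DecidableEq α] [Nonempty α]
    (hL : ∑ a, L a + 1 = Fintype.card β) :
    Nat.card {G : SimpleGraph (α ⊕ β) //
        IsBipartiteSum G ∧ (∀ a, deg G (.inl a) = L a + 1) ∧ G.IsTree} * ∏ a, (L a)! =
      (Fintype.card β - 1)! * Fintype.card β ^ (Fintype.card α - 1) := by
  rw [card_bipartiteTrees_eq_sum hL, Finset.sum_mul, ← sum_multinomial_eq_card_pow,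
    Finset.mul_sum]
  exact Finset.sum_congr rfl fun r hr ↦
    card_coloredTrees_isLeft_mul_prod_factorial hL (mem_piAntidiag.1 hr).1

end Bipartite

/-- Tree Counting Theorem: the number of bipartite trees on `V_L ⊔ V_R` with
`|V_L| = v_L`, `|V_R| = v_R = 1 + ∑ L_i`, where the `i`-th left vertex has degree
`L_i + 1`, equals `((v_R - 1)! / ∏ L_i!) · v_R^(v_L - 1)`. -/
theorem tree_counting (vL : ℕ) (hvL : 0 < vL) (L : Fin vL → ℕ)
    (vR : ℕ) (hvR : vR = 1 + ∑ i, L i) :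
    (Nat.card {G : SimpleGraph (Fin vL ⊕ Fin vR) //
        IsBipartiteSum G ∧ (∀ i : Fin vL, deg G (Sum.inl i) = L i + 1) ∧ G.IsTree} : ℚ)
      = ((vR - 1).factorial : ℚ) / (∏ i, ((L i).factorial : ℚ))
        * (vR : ℚ) ^ (vL - 1) := by
  have : Nonempty (Fin vL) := ⟨⟨0, hvL⟩⟩
  have h := card_bipartiteTrees_mul_prod_factorial (β := Fin vR) (L := L)
    (by rw [Fintype.card_fin, hvR, add_comm])
  rw [Fintype.card_fin, Fintype.card_fin] at h
  rw [div_mul_eq_mul_div, eq_div_iff (by positivity)]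
  exact_mod_cast h
end

section
/- Let G be a finite bipartite tree with parts V_L and V_R, where V_R is nonempty. Then G has exactly |V_R| left maximal divisions. -/
/-- A division of a bipartite graph: a partition of the edge set into two compartments
`Lpart` and `Rpart` such that every vertex of `V_L` is incident to at most one edge of
`Lpart` and every vertex of `V_R` is incident to at most one edge of `Rpart`. -/
structure Division {α β : Type*} (G : SimpleGraph (α ⊕ β)) where
  Lpart : Set (Sym2 (α ⊕ β))
  Rpart : Set (Sym2 (α ⊕ β))
  union_eq : Lpart ∪ Rpart = G.edgeSet
  disj : Disjoint Lpart Rpart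
  left_le_one : ∀ a : α, {e ∈ Lpart | Sum.inl a ∈ e}.Subsingleton
  right_le_one : ∀ b : β, {e ∈ Rpart | Sum.inr b ∈ e}.Subsingleton

/-- A division is left maximal if every vertex of `V_L` is incident to exactly one
edge of `Lpart` (existence suffices, since a division allows at most one). -/
def Division.LeftMaximal {α β : Type*} {G : SimpleGraph (α ⊕ β)} (D : Division G) : Prop :=
  ∀ a : α, ∃ e ∈ D.Lpart, Sum.inl a ∈ e

/-- A division is right maximal if every vertex of `V_R` is incident to exactly one
edge of `Rpart`. -/
def Division.RightMaximal {α β : Type*} {G : SimpleGraph (α ⊕ β)} (D : Division G) : Prop :=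
  ∀ b : β, ∃ e ∈ D.Rpart, Sum.inr b ∈ e

namespace SimpleGraph

variable {V : Type*} {G : SimpleGraph V}

lemma IsTree.exists_adj_dist_add_one (hG : G.IsTree) (r : V) {v : V} (hv : v ≠ r) :
    ∃ u, G.Adj v u ∧ G.dist r u + 1 = G.dist r v := by
  obtain ⟨p, -, hp⟩ := (hG.connected v r).exists_path_of_dist
  obtain ⟨u, h, q, rfl⟩ := Walk.exists_eq_cons_of_ne hv p
  have hq : G.dist r u < G.dist r v := by
    have := dist_le q
    rw [Walk.length_cons] at hp
    rw [dist_comm, dist_comm (u := r)]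
    omega
  refine ⟨u, h, ?_⟩
  have := hG.dist_eq_dist_add_one_of_adj r h
  omega

lemma IsTree.eq_of_adj_of_dist_add_one (hG : G.IsTree) {r u v w : V} (hu : G.Adj v u)
    (hw : G.Adj v w) (hdu : G.dist r u + 1 = G.dist r v) (hdw : G.dist r w + 1 = G.dist r v) :
    u = w := by
  classical
  obtain ⟨p, hp, -⟩ := (hG.connected r v).exists_path_of_dist
  suffices ∀ x, G.Adj v x → G.dist r x + 1 = G.dist r v → x = p.penultimate from
    (this u hu hdu).trans (this w hw hdw).symm
  intro x hx hdx
  obtain ⟨q, hq, hqx⟩ := (hG.connected r x).exists_path_of_dist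
  have hvq : v ∉ q.support := fun hv ↦ by
    have := (dist_le (q.takeUntil v hv)).trans (q.length_takeUntil_le_length hv)
    omega
  exact hG.isAcyclic.eq_penultimate_of_adj_end hp hx
    (hG.isAcyclic.mem_support_of_ne_mem_support_of_adj_of_isPath hp hq hx hvq)

lemma IsTree.exists_range_eq_compl_singleton [Finite V] (hG : G.IsTree) {σ : G.edgeSet → V}
    (hσ : σ.Injective) : ∃ r, Set.range σ = {r}ᶜ := by
  have : Fintype V := Fintype.ofFinite V
  have : Fintype G.edgeSet := Fintype.ofFinite G.edgeSet
  have hcard := hG.card_edgeFinset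
  rw [edgeFinset, Set.toFinset_card, ← Nat.card_eq_fintype_card, ← Nat.card_eq_fintype_card,
    ← Set.ncard_range_of_injective hσ] at hcard
  obtain ⟨r, hr⟩ :=
    Set.ncard_eq_one.mp (Set.ncard_compl_of_ncard_eq_add (Set.range σ) (by omega))
  exact ⟨r, (compl_eq_comm.mp hr).symm⟩

lemma IsTree.dist_add_one_of_range_eq_compl_singleton [Finite G.edgeSet] (hG : G.IsTree) {r : V}
    {σ : G.edgeSet → V} (hσe : ∀ e : G.edgeSet, σ e ∈ (e : Sym2 V))
    (hrange : Set.range σ = {r}ᶜ) (e : G.edgeSet) {w : V} (hew : (e : Sym2 V) = s(σ e, w)) :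
    G.dist r w + 1 = G.dist r (σ e) := by
  by_contra hne
  have hadj : G.Adj (σ e) w := by rw [← mem_edgeSet, ← hew]; exact e.2
  replace hne : G.dist r (σ e) + 1 = G.dist r w := by
    have := hG.dist_eq_dist_add_one_of_adj r hadj
    omega
  -- The edge assigned to the far endpoint of a bad edge is again bad, one step farther out,
  -- since the near endpoint of a bad edge is the unique neighbour of its far one closer to `r`.
  let Bad : Set G.edgeSet :=
    {f | ∃ u, (f : Sym2 V) = s(σ f, u) ∧ G.dist r (σ f) + 1 = G.dist r u}
  have : Nonempty Bad := ⟨⟨e, w, hew, hne⟩⟩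
  obtain ⟨⟨f, u, hfu, hdu⟩, hmax⟩ := Finite.exists_max fun f : Bad ↦ G.dist r (σ f)
  have hur : u ≠ r := by rintro rfl; simp at hdu
  obtain ⟨f', rfl⟩ : u ∈ Set.range σ := hrange ▸ hur
  obtain ⟨x, hf'x⟩ := Sym2.mem_iff_exists.mp (hσe f')
  have hff' : G.Adj (σ f) (σ f') := by rw [← mem_edgeSet, ← hfu]; exact f.2
  have hf'x' : G.Adj (σ f') x := by rw [← mem_edgeSet, ← hf'x]; exact f'.2
  rcases hG.dist_eq_dist_add_one_of_adj r hf'x' with hx | hx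
  · have hσf : σ f = x := hG.eq_of_adj_of_dist_add_one hff'.symm hf'x' hdu hx.symm
    have : f = f' := Subtype.ext (by rw [hfu, hf'x, hσf, Sym2.eq_swap])
    exact hff'.ne (congrArg σ this)
  · have := hmax ⟨f', x, hf'x, hx.symm⟩
    simp only at this
    omega

end SimpleGraph

section

open SimpleGraph

variable {α β : Type*} {G : SimpleGraph (α ⊕ β)}

lemma IsBipartiteSum.exists_eq_inr_of_adj (hbip : IsBipartiteSum G) {a : α} {v : α ⊕ β}
    (h : G.Adj (.inl a) v) : ∃ b, v = .inr b := by
  cases v with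
  | inl a' => exact absurd h (hbip.1 a a')
  | inr b => exact ⟨b, rfl⟩

lemma IsBipartiteSum.exists_eq_inl_of_adj (hbip : IsBipartiteSum G) {b : β} {v : α ⊕ β}
    (h : G.Adj (.inr b) v) : ∃ a, v = .inl a := by
  cases v with
  | inl a => exact ⟨a, rfl⟩
  | inr b' => exact absurd h (hbip.2 b b')

lemma IsBipartiteSum.exists_eq_mk (hbip : IsBipartiteSum G) {e : Sym2 (α ⊕ β)}
    (he : e ∈ G.edgeSet) : ∃ a b, G.Adj (.inl a) (.inr b) ∧ e = s(.inl a, .inr b) := by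
  induction e with | _ v w => ?_
  cases v with
  | inl a =>
    obtain ⟨b, rfl⟩ := hbip.exists_eq_inr_of_adj he
    exact ⟨a, b, he, rfl⟩
  | inr b =>
    obtain ⟨a, rfl⟩ := hbip.exists_eq_inl_of_adj he
    exact ⟨a, b, he.symm, Sym2.eq_swap⟩

namespace Division

lemma Lpart_subset (D : Division G) : D.Lpart ⊆ G.edgeSet :=
  D.union_eq ▸ Set.subset_union_left

lemma Rpart_eq_diff (D : Division G) : D.Rpart = G.edgeSet \ D.Lpart := by
  rw [← D.union_eq, Set.union_sdiff_left, D.disj.symm.sdiff_eq_left]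

lemma ext_Lpart {D₁ D₂ : Division G} (h : D₁.Lpart = D₂.Lpart) : D₁ = D₂ := by
  have hR : D₁.Rpart = D₂.Rpart := by rw [Rpart_eq_diff, Rpart_eq_diff, h]
  cases D₁; cases D₂
  congr

def Owns (D : Division G) : α ⊕ β → Sym2 (α ⊕ β) → Prop
  | .inl a, e => e ∈ D.Lpart ∧ .inl a ∈ e
  | .inr b, e => e ∈ D.Rpart ∧ .inr b ∈ e

variable {D : Division G} {v w : α ⊕ β} {e e' : Sym2 (α ⊕ β)}

lemma Owns.mem (h : D.Owns v e) : v ∈ e := by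
  cases v <;> exact h.2

lemma Owns.mem_edgeSet (h : D.Owns v e) : e ∈ G.edgeSet := by
  rw [← D.union_eq]
  cases v
  · exact .inl h.1
  · exact .inr h.1

lemma Owns.edge_eq (h : D.Owns v e) (h' : D.Owns v e') : e = e' := by
  cases v with
  | inl a => exact D.left_le_one a h h'
  | inr b => exact D.right_le_one b h h'

lemma Owns.vertex_eq (hbip : IsBipartiteSum G) (h : D.Owns v e) (h' : D.Owns w e) :
    v = w := by
  obtain ⟨a, b, -, rfl⟩ := hbip.exists_eq_mk h.mem_edgeSet
  have hv := h.mem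
  have hw := h'.mem
  cases v <;> cases w <;> simp only [Sym2.mem_iff, reduceCtorEq, or_false, false_or] at hv hw
  · rw [hv, hw]
  · exact absurd h'.1 (Set.disjoint_left.mp D.disj h.1)
  · exact absurd h.1 (Set.disjoint_left.mp D.disj h'.1)
  · rw [hv, hw]

lemma exists_owns (hbip : IsBipartiteSum G) (D : Division G) (he : e ∈ G.edgeSet) :
    ∃ v, D.Owns v e := by
  obtain ⟨a, b, -, rfl⟩ := hbip.exists_eq_mk he
  rcases (D.union_eq ▸ he : _ ∈ D.Lpart ∪ D.Rpart) with hL | hR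
  · exact ⟨.inl a, hL, Sym2.mem_mk_left _ _⟩
  · exact ⟨.inr b, hR, Sym2.mem_mk_right _ _⟩

def ofRoot (hbip : IsBipartiteSum G) (htree : G.IsTree) (b₀ : β) : Division G where
  Lpart := {e | ∃ a b, G.Adj (.inl a) (.inr b) ∧ e = s(.inl a, .inr b) ∧
    G.dist (.inr b₀) (.inr b) + 1 = G.dist (.inr b₀) (.inl a)}
  Rpart := {e | ∃ a b, G.Adj (.inl a) (.inr b) ∧ e = s(.inl a, .inr b) ∧
    G.dist (.inr b₀) (.inl a) + 1 = G.dist (.inr b₀) (.inr b)}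
  union_eq := by
    ext e
    constructor
    · rintro (⟨a, b, h, rfl, -⟩ | ⟨a, b, h, rfl, -⟩) <;> exact h
    · intro he
      obtain ⟨a, b, h, rfl⟩ := hbip.exists_eq_mk he
      rcases htree.dist_eq_dist_add_one_of_adj (.inr b₀) h with hd | hd
      · exact .inl ⟨a, b, h, rfl, hd.symm⟩
      · exact .inr ⟨a, b, h, rfl, hd.symm⟩
  disj := by
    refine Set.disjoint_left.mpr ?_
    rintro e ⟨a, b, -, rfl, hd⟩ ⟨a', b', -, he, hd'⟩
    simp only [Sym2.eq_iff, Sum.inl.injEq, Sum.inr.injEq, reduceCtorEq, false_and,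
      or_false] at he
    obtain ⟨rfl, rfl⟩ := he
    omega
  left_le_one := by
    rintro a _ ⟨⟨a₁, b₁, h₁, rfl, hd₁⟩, hm₁⟩ _ ⟨⟨a₂, b₂, h₂, rfl, hd₂⟩, hm₂⟩
    simp only [Sym2.mem_iff, Sum.inl.injEq, reduceCtorEq, or_false] at hm₁ hm₂
    subst hm₁ hm₂
    rw [htree.eq_of_adj_of_dist_add_one h₁ h₂ hd₁ hd₂]
  right_le_one := by
    rintro b _ ⟨⟨a₁, b₁, h₁, rfl, hd₁⟩, hm₁⟩ _ ⟨⟨a₂, b₂, h₂, rfl, hd₂⟩, hm₂⟩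
    simp only [Sym2.mem_iff, Sum.inr.injEq, reduceCtorEq, false_or] at hm₁ hm₂
    subst hm₁ hm₂
    rw [htree.eq_of_adj_of_dist_add_one h₁.symm h₂.symm hd₁ hd₂]

variable (hbip : IsBipartiteSum G) (htree : G.IsTree)

lemma ofRoot_leftMaximal (b₀ : β) : (ofRoot hbip htree b₀).LeftMaximal := by
  intro a
  obtain ⟨v, h, hd⟩ :=
    htree.exists_adj_dist_add_one (.inr b₀) (v := .inl a) Sum.inl_ne_inr
  obtain ⟨b, rfl⟩ := hbip.exists_eq_inr_of_adj h
  exact ⟨_, ⟨a, b, h, rfl, hd⟩, Sym2.mem_mk_left _ _⟩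

lemma ofRoot_injective : Function.Injective (ofRoot hbip htree) := by
  intro b₁ b₂ h
  by_contra hne
  obtain ⟨v, hv, hd⟩ :=
    htree.exists_adj_dist_add_one (.inr b₁) (v := .inr b₂) (by simpa [eq_comm] using hne)
  obtain ⟨a, rfl⟩ := hbip.exists_eq_inl_of_adj hv
  have hR : s(.inl a, .inr b₂) ∈ (ofRoot hbip htree b₁).Rpart := ⟨a, b₂, hv.symm, rfl, hd⟩
  obtain ⟨a', b', -, he, hd'⟩ := h ▸ hR
  simp only [Sym2.eq_iff, Sum.inl.injEq, Sum.inr.injEq, reduceCtorEq, false_and,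
    or_false] at he
  obtain ⟨rfl, rfl⟩ := he
  simp at hd'

lemma LeftMaximal.exists_eq_ofRoot [Finite α] [Finite β] (hD : D.LeftMaximal) :
    ∃ b₀, D = ofRoot hbip htree b₀ := by
  choose σ hσ using fun e : G.edgeSet ↦ D.exists_owns hbip e.2
  have hσinj : σ.Injective := fun e e' h ↦ Subtype.ext ((hσ e).edge_eq (h ▸ hσ e'))
  obtain ⟨r, hr⟩ := htree.exists_range_eq_compl_singleton hσinj
  have hleft (a : α) : .inl a ∈ Set.range σ := by
    obtain ⟨e, he, hae⟩ := hD a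
    have hown : D.Owns (.inl a) e := ⟨he, hae⟩
    exact ⟨⟨e, hown.mem_edgeSet⟩, (hσ _).vertex_eq hbip hown⟩
  obtain ⟨b₀, rfl⟩ : ∃ b₀, r = .inr b₀ := by
    cases r with
    | inl a => exact absurd (hr ▸ hleft a) (by simp)
    | inr b => exact ⟨b, rfl⟩
  have hfar := htree.dist_add_one_of_range_eq_compl_singleton (fun e ↦ (hσ e).mem) hr
  refine ⟨b₀, ext_Lpart (Set.ext fun e ↦ ⟨fun he ↦ ?_, ?_⟩)⟩
  · obtain ⟨a, b, h, rfl⟩ := hbip.exists_eq_mk (D.Lpart_subset he)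
    have hσa : σ ⟨_, h⟩ = .inl a := (hσ _).vertex_eq hbip ⟨he, Sym2.mem_mk_left _ _⟩
    have := hfar ⟨_, h⟩ (w := .inr b) (by rw [hσa])
    exact ⟨a, b, h, rfl, hσa ▸ this⟩
  · rintro ⟨a, b, h, rfl, hd⟩
    have hown := hσ ⟨s(.inl a, .inr b), h⟩
    rcases Sym2.mem_iff.mp hown.mem with hσa | hσb
    · rw [hσa] at hown
      exact hown.1
    · have := hfar ⟨s(.inl a, .inr b), h⟩ (w := .inl a) (by rw [hσb]; exact Sym2.eq_swap)
      rw [hσb] at this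
      omega

end Division

end

theorem card_left_maximal_divisions_general {α β : Type*} [Fintype α] [Fintype β]
    (G : SimpleGraph (α ⊕ β)) (hbip : IsBipartiteSum G) (htree : G.IsTree) :
    Nat.card {D : Division G // D.LeftMaximal} = Fintype.card β := by
  let F (b : β) : {D : Division G // D.LeftMaximal} :=
    ⟨Division.ofRoot hbip htree b, Division.ofRoot_leftMaximal hbip htree b⟩
  have hF : F.Bijective :=
    ⟨fun b₁ b₂ h ↦ Division.ofRoot_injective hbip htree (congrArg Subtype.val h),
      fun ⟨_, hD⟩ ↦ (hD.exists_eq_ofRoot hbip htree).imp fun _ hb ↦ Subtype.ext hb.symm⟩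
  rw [← Nat.card_eq_fintype_card, Nat.card_congr (Equiv.ofBijective F hF)]

/-- A finite bipartite tree with `V_R` nonempty has exactly `|V_R|` left maximal
divisions. -/
theorem card_left_maximal_divisions {α β : Type*} [Fintype α] [Fintype β] [Nonempty β]
    (G : SimpleGraph (α ⊕ β)) (hbip : IsBipartiteSum G) (htree : G.IsTree) :
    Nat.card {D : Division G // D.LeftMaximal} = Fintype.card β :=
  card_left_maximal_divisions_general G hbip htree
end

section
/- Let v_L be a positive integer, L = (L_1, …, L_{v_L}) a vector of non-negative integers, and v_R = 1 + Σ_{i=1}^{v_L} L_i. Let G_R be any bipartite graph on parts V_L = {1, …, v_L} and V_R = {1, …, v_R} in which the i-th vertex of V_L is incident to exactly L_i edges and every vertex of V_R is incident to at most one edge. Then the number of functions b : V_L → V_R such that the simple bipartite graph with edge set E(G_R) ∪ {{i, b(i)} : i ∈ V_L} is a tree on the full vertex set V_L ⊔ V_R equals v_R^{v_L − 1}. In particular, this number is independent of the choice of G_R. -/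
/-!
Every right vertex has at most one red neighbour, and counting degrees shows that exactly one
right vertex `r` has none. Orient each blue edge from `i` to `b i` and each red edge from its right
end to its left end: every vertex but `r` gets exactly one parent, so the graph has at most
`|V| - 1` edges, and it is a tree iff it is connected iff following parents always ends at `r`,
i.e. iff `i ↦ (red neighbour of b i)` is a rooted forest on `V_L`. Grouping the `b` by this forest
turns the count into a sum over rooted forests on `V_L` in which an edge into `j` weighs `L_j`
and a root weighs `1`. The weighted Cayley formula `∑ ∏ w = w₀ (w₀ + ∑ L)^(v_L - 1)` then gives
`v_R^(v_L - 1)`; it is proved by induction, deleting the last vertex and reattaching its children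
to its parent.
-/

open Finset SimpleGraph

/-- `P v = some w` says that `w` is the parent of `v`, and `P v = none` that `v` is a root. -/
def IsRootedForest {V : Type*} (P : V → Option V) : Prop :=
  WellFounded fun w v => P v = some w

namespace SimpleGraph

variable {V : Type*} {G : SimpleGraph V} {P : V → Option V} {r : V}

theorem connected_iff_isRootedForest (hadj : ∀ u v, G.Adj u v ↔ P u = some v ∨ P v = some u)
    (hroot : ∀ v, P v = none ↔ v = r) : G.Connected ↔ IsRootedForest P := by
  have hr : P r = none := (hroot r).2 rfl
  constructor
  · intro hG
    have hacc : ∀ {u v}, G.Walk v u → Acc (fun w v => P v = some w) u →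
        Acc (fun w v => P v = some w) v := by
      intro u v p
      induction p with
      | nil => exact id
      | cons h _ ih =>
        intro hu
        rcases (hadj _ _).1 h with h | h
        · exact ⟨_, fun w hw => Option.some.inj (hw.symm.trans h) ▸ ih hu⟩
        · exact (ih hu).inv h
    exact ⟨fun v => hacc (hG v r).some ⟨_, fun w hw => by simp [hr] at hw⟩⟩
  · intro hP
    have hreach : ∀ v, G.Reachable v r := fun v => by
      induction hP.apply v with
      | intro v _ ih =>
        cases hv : P v with
        | none => rw [(hroot v).1 hv]
        | some w => exact ((hadj v w).2 (Or.inl hv)).reachable.trans (ih w hv)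
    have : Nonempty V := ⟨r⟩
    exact ⟨fun u v => (hreach u).trans (hreach v).symm⟩

theorem card_edgeSet_add_one_le [Finite V]
    (hadj : ∀ u v, G.Adj u v → P u = some v ∨ P v = some u) (hr : P r = none) :
    Nat.card G.edgeSet + 1 ≤ Nat.card V := by
  have hsub : G.edgeSet ⊆ (fun v => s(v, (P v).getD v)) '' {r}ᶜ := by
    intro e he
    induction e using Sym2.ind with
    | h u v =>
      rcases hadj u v he with h | h
      · exact ⟨u, by rintro rfl; simp [hr] at h, by simp [h]⟩
      · exact ⟨v, by rintro rfl; simp [hr] at h, by simp [h, Sym2.eq_swap]⟩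
  have hcard := (Set.ncard_le_ncard hsub).trans Set.ncard_image_le
  rw [Set.ncard_compl, Set.ncard_singleton] at hcard
  have : 0 < Nat.card V := Nat.card_pos_iff.2 ⟨⟨r⟩, inferInstance⟩
  rw [Nat.card_coe_set_eq]
  omega

theorem isTree_iff_isRootedForest [Finite V]
    (hadj : ∀ u v, G.Adj u v ↔ P u = some v ∨ P v = some u)
    (hroot : ∀ v, P v = none ↔ v = r) : G.IsTree ↔ IsRootedForest P := by
  rw [isTree_iff_connected_and_card, ← connected_iff_isRootedForest hadj hroot]
  refine ⟨And.left, fun hG => ⟨hG, ?_⟩⟩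
  exact le_antisymm (card_edgeSet_add_one_le (fun u v => (hadj u v).1) ((hroot r).2 rfl))
    hG.card_vert_le_card_edgeSet_add_one

end SimpleGraph

def sumParent {α β : Type*} (b : α → β) (c : β → Option α) :
    α ⊕ β → Option (α ⊕ β) :=
  Sum.elim (fun i => some (.inr (b i))) fun j => (c j).map .inl

theorem isRootedForest_sumParent_iff {α β : Type*} (b : α → β) (c : β → Option α) :
    IsRootedForest (sumParent b c) ↔ IsRootedForest (c ∘ b) := by
  set P := sumParent b c
  constructor
  · intro hP
    refine Subrelation.wf (fun {j i} h => ?_) (InvImage.wf Sum.inl hP.transGen)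
    have hbi : c (b i) = some j := h
    exact .head (show P (.inr (b i)) = some (.inl j) by simp [P, sumParent, hbi]) (.single rfl)
  · intro h
    have hinr : ∀ j, (∀ i, c j = some i → Acc (fun w v => P v = some w) (.inl i)) →
        Acc (fun w v => P v = some w) (.inr j) := fun j hj => ⟨_, fun v hv => by
      obtain ⟨i, hi, rfl⟩ := Option.map_eq_some_iff.1 hv
      exact hj i hi⟩
    have hinl : ∀ i, Acc (fun w v => P v = some w) (.inl i) := fun i =>
      h.induction (C := fun i => Acc (fun w v => P v = some w) (.inl i)) i
      fun i ih => ⟨_, fun v hv => by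
        cases hv
        exact hinr _ ih⟩
    exact ⟨Sum.rec hinl fun j => hinr j fun i _ => hinl i⟩

section ContractLast

open Fin

variable {n : ℕ}

theorem sum_option_castSucc {R : Type*} [AddCommMonoid R] (g : Option (Fin (n + 1)) → R) :
    ∑ o, g o = ∑ o : Option (Fin n), g (o.map castSucc) + g (some (last n)) := by
  simp only [Fintype.sum_option, Fin.sum_univ_castSucc, Option.map_none, Option.map_some]
  ac_rfl

/-- For a forest on `Fin (n + 1)` in which `last n` has parent `tgt` and `castSucc i` has parent
`f i`: delete `last n` and reattach its children to `tgt`. -/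
def contractLast (tgt : Option (Fin n)) (f : Fin n → Option (Fin (n + 1))) (i : Fin n) :
    Option (Fin n) :=
  if f i = some (last n) then tgt else (f i).bind (lastCases none some)

/-- The parents that `castSucc i` can have in the forests whose `contractLast tgt` gives `i` the
parent `x`. -/
def lastChoices (tgt x : Option (Fin n)) : Finset (Option (Fin (n + 1))) :=
  if x = tgt then {x.map castSucc, some (last n)} else {x.map castSucc}

theorem mem_lastChoices {tgt x : Option (Fin n)} {o : Option (Fin (n + 1))} :
    o ∈ lastChoices tgt x ↔ o = x.map castSucc ∨ o = some (last n) ∧ x = tgt := by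
  unfold lastChoices
  split_ifs with h <;> simp [h]

theorem map_castSucc_ne_some_last (x : Option (Fin n)) : x.map castSucc ≠ some (last n) := by
  cases x <;> simp [Fin.castSucc_ne_last]

theorem sum_lastChoices {R : Type*} [AddCommMonoid R] (g : Option (Fin (n + 1)) → R)
    (tgt x : Option (Fin n)) :
    ∑ o ∈ lastChoices tgt x, g o =
      g (x.map castSucc) + if x = tgt then g (some (last n)) else 0 := by
  unfold lastChoices
  split_ifs with h
  · exact sum_pair (map_castSucc_ne_some_last x)
  · simp

theorem contractLast_eq {tgt : Option (Fin n)} {f : Fin n → Option (Fin (n + 1))}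
    {ψ : Fin n → Option (Fin n)} (hf : ∀ i, f i ∈ lastChoices tgt (ψ i)) :
    contractLast tgt f = ψ := by
  funext i
  rcases mem_lastChoices.1 (hf i) with h | ⟨h, rfl⟩
  · cases hψ : ψ i <;> simp [contractLast, h, hψ, Fin.castSucc_ne_last]
  · simp [contractLast, h]

theorem mem_lastChoices_contractLast (tgt : Option (Fin n)) (f : Fin n → Option (Fin (n + 1)))
    (i : Fin n) : f i ∈ lastChoices tgt (contractLast tgt f i) := by
  rw [mem_lastChoices]
  by_cases h : f i = some (last n)
  · simp [contractLast, h]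
  · left
    rcases hf : f i with _ | j
    · simp [contractLast, hf]
    · induction j using lastCases with
      | last => exact absurd hf h
      | cast j => simp [contractLast, hf]

end ContractLast

namespace IsRootedForest

open Fin

variable {n : ℕ}

theorem snoc {tgt : Option (Fin n)} {ψ : Fin n → Option (Fin n)}
    {f : Fin n → Option (Fin (n + 1))} (hψ : IsRootedForest ψ)
    (hf : ∀ i, f i ∈ lastChoices tgt (ψ i)) :
    IsRootedForest (Fin.snoc f (tgt.map castSucc) : Fin (n + 1) → Option (Fin (n + 1))) := by
  set φ : Fin (n + 1) → Option (Fin (n + 1)) := Fin.snoc f (tgt.map castSucc)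
  have hlast : (∀ j, tgt = some j → Acc (fun w v => φ v = some w) (castSucc j)) →
      Acc (fun w v => φ v = some w) (last n) := fun h => ⟨_, fun y hy => by
    obtain ⟨j, hj, rfl⟩ := Option.map_eq_some_iff.1 (by simpa [φ] using hy)
    exact h j hj⟩
  have hcast : ∀ i, Acc (fun w v => φ v = some w) (castSucc i) := fun i =>
    hψ.induction (C := fun i => Acc (fun w v => φ v = some w) (castSucc i)) i fun i ih =>
      ⟨_, fun y hy => by
        rcases mem_lastChoices.1 (hf i) with h | ⟨h, hψi⟩
        · obtain ⟨j, hj, rfl⟩ := Option.map_eq_some_iff.1 (by simpa [φ, h] using hy)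
          exact ih j hj
        · obtain rfl : last n = y := by simpa [φ, h] using hy
          exact hlast fun j hj => ih j (hψi.trans hj)⟩
  exact ⟨lastCases (hlast fun j _ => hcast j) hcast⟩

theorem contractLast_of_snoc {tgt : Option (Fin n)} {f : Fin n → Option (Fin (n + 1))}
    (h : IsRootedForest (Fin.snoc f (tgt.map castSucc) : Fin (n + 1) → Option (Fin (n + 1)))) :
    IsRootedForest (contractLast tgt f) := by
  refine Subrelation.wf (fun {j i} hji => ?_) (InvImage.wf castSucc h.transGen)
  rcases mem_lastChoices.1 (mem_lastChoices_contractLast tgt f i) with hfi | ⟨hfi, htgt⟩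
  · exact .single (by simp [hfi, show contractLast tgt f i = some j from hji])
  · obtain rfl : some j = tgt := (show contractLast tgt f i = some j from hji) ▸ htgt
    exact .head (b := last n) (by simp) (.single (by simp [hfi]))

theorem not_snoc_some_last (f : Fin n → Option (Fin (n + 1))) :
    ¬ IsRootedForest (Fin.snoc f (some (last n)) : Fin (n + 1) → Option (Fin (n + 1))) :=
  fun h => h.irrefl.irrefl (last n) (by simp)

end IsRootedForest

section Count

open Fin

variable {R : Type*} [CommSemiring R] {n : ℕ}

open scoped Classical in
theorem sum_isRootedForest_snoc (w : Option (Fin (n + 1)) → R) (tgt : Option (Fin n)) :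
    ∑ f : Fin n → Option (Fin (n + 1)) with
        IsRootedForest (Fin.snoc f (tgt.map castSucc) : Fin (n + 1) → Option (Fin (n + 1))),
      ∏ i, w (f i) =
    ∑ ψ : Fin n → Option (Fin n) with IsRootedForest ψ,
      ∏ i, (w ((ψ i).map castSucc) + if ψ i = tgt then w (some (last n)) else 0) := by
  rw [← sum_fiberwise_of_maps_to (g := contractLast tgt) (t := {ψ | IsRootedForest ψ})
    fun f hf => by simpa using (mem_filter.1 hf).2.contractLast_of_snoc]
  refine sum_congr rfl fun ψ hψ => ?_
  -- the fibre over `ψ` is a box, so its sum is a product of sums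
  calc _ = ∑ f ∈ Fintype.piFinset fun i => lastChoices tgt (ψ i), ∏ i, w (f i) := by
        refine sum_congr (Finset.ext fun f => ?_) fun _ _ => rfl
        simp only [mem_filter, mem_univ, true_and, Fintype.mem_piFinset]
        constructor
        · rintro ⟨-, rfl⟩ i
          exact mem_lastChoices_contractLast tgt f i
        · intro hf
          exact ⟨(mem_filter.1 hψ).2.snoc hf, contractLast_eq hf⟩
    _ = _ := by
        rw [← prod_univ_sum]
        simp only [sum_lastChoices]

open scoped Classical in
theorem sum_isRootedForest_succ (w : Option (Fin (n + 1)) → R) :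
    ∑ φ : Fin (n + 1) → Option (Fin (n + 1)) with IsRootedForest φ, ∏ v, w (φ v) =
    ∑ tgt : Option (Fin n), w (tgt.map castSucc) *
      ∑ ψ : Fin n → Option (Fin n) with IsRootedForest ψ,
        ∏ i, (w ((ψ i).map castSucc) + if ψ i = tgt then w (some (last n)) else 0) := by
  let e := snocEquiv fun _ : Fin (n + 1) => Option (Fin (n + 1))
  have hsnoc : ∀ p, e p = Fin.snoc p.2 p.1 := fun _ => rfl
  rw [sum_filter, ← e.sum_comp, Fintype.sum_prod_type, sum_option_castSucc]
  simp only [hsnoc, IsRootedForest.not_snoc_some_last, if_false, sum_const_zero, add_zero,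
    Fin.prod_univ_castSucc, Fin.snoc_castSucc, Fin.snoc_last]
  refine sum_congr rfl fun tgt _ => ?_
  rw [← sum_isRootedForest_snoc, sum_filter, mul_sum]
  refine sum_congr rfl fun f _ => ?_
  split_ifs <;> simp [mul_comm]

open scoped Classical in
/-- The weighted Cayley formula `∑ φ, ∏ i, w (φ i) = w none * (∑ o, w o) ^ (n - 1)`, multiplied by
`∑ o, w o` so that it also holds for `n = 0`. -/
theorem mul_sum_isRootedForest_prod (w : Option (Fin n) → R) :
    (∑ o, w o) * ∑ φ : Fin n → Option (Fin n) with IsRootedForest φ, ∏ i, w (φ i) =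
      w none * (∑ o, w o) ^ n := by
  induction n with
  | zero =>
    simp only [univ_unique, sum_singleton, IsRootedForest, wellFounded_of_isEmpty, filter_true,
      univ_eq_empty, prod_empty, Finset.sum_const, card_singleton, one_smul, mul_one, pow_zero]
    rfl
  | succ n ih =>
    set a := w (some (last n))
    have hsum : ∀ tgt : Option (Fin n),
        ∑ o, (w (o.map castSucc) + if o = tgt then a else 0) = ∑ o, w o := fun tgt => by
      rw [sum_add_distrib, Fintype.sum_ite_eq', sum_option_castSucc w]
    rw [sum_isRootedForest_succ, mul_sum]
    calc _ = ∑ tgt : Option (Fin n),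
          w (tgt.map castSucc) * ((w none + if none = tgt then a else 0) * (∑ o, w o) ^ n) := by
          refine sum_congr rfl fun tgt _ => ?_
          rw [mul_left_comm, ← hsum tgt, ih]
          simp
      _ = w none * (∑ o, w o) ^ (n + 1) := by
          rw [sum_option_castSucc w]
          simp only [Fintype.sum_option, Option.map_none, Option.map_some, add_mul, ite_mul,
            zero_mul, mul_add, mul_ite, mul_zero, sum_add_distrib, ← sum_mul, sum_ite_eq, mem_univ,
            ↓reduceIte]
          ring

end Count

theorem card_filter_comp_eq_sum_prod {α β γ : Type*} [Fintype α] [DecidableEq α] [Fintype β]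
    [Fintype γ] [DecidableEq γ] (f : β → γ) (p : (α → γ) → Prop) [DecidablePred p] :
    #{b : α → β | p (f ∘ b)} = ∑ φ with p φ, ∏ i, #{j | f j = φ i} := by
  rw [card_eq_sum_card_fiberwise (f := (f ∘ ·)) (t := {φ | p φ}) fun b hb => by simpa using hb]
  refine sum_congr rfl fun φ hφ => ?_
  rw [← Fintype.card_piFinset]
  congr 1
  ext b
  simp only [mem_filter, mem_univ, true_and, Fintype.mem_piFinset, funext_iff, Function.comp_apply]
  exact ⟨And.right, fun h => ⟨(funext h : f ∘ b = φ) ▸ (mem_filter.1 hφ).2, h⟩⟩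

namespace SimpleGraph

variable {α β : Type*} {G : SimpleGraph (α ⊕ β)}

open scoped Classical in
noncomputable def leftNeighbor (G : SimpleGraph (α ⊕ β)) (j : β) : Option α :=
  if h : ∃ i, G.Adj (.inl i) (.inr j) then some h.choose else none

theorem leftNeighbor_eq_some_iff [Finite α] [Finite β] (hdeg : ∀ j, deg G (.inr j) ≤ 1)
    {i : α} {j : β} : G.leftNeighbor j = some i ↔ G.Adj (.inl i) (.inr j) := by
  unfold leftNeighbor
  split_ifs with h
  · refine ⟨fun hi => Option.some.inj hi ▸ h.choose_spec, fun hi => congrArg some ?_⟩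
    exact Sum.inl_injective <|
      (Set.ncard_le_one (Set.toFinite _)).1 (hdeg j) _ h.choose_spec.symm _ hi.symm
  · simpa using fun hi => h ⟨i, hi⟩

theorem card_leftNeighbor_eq_some [Finite α] [DecidableEq α] [Fintype β]
    (hbip : IsBipartiteSum G) (hdeg : ∀ j, deg G (.inr j) ≤ 1) (i : α) :
    #{j | G.leftNeighbor j = some i} = deg G (.inl i) := by
  have : G.neighborSet (.inl i) = Sum.inr '' ({j | G.leftNeighbor j = some i} : Finset β) := by
    ext (a | j) <;> simp [hbip.1 i, leftNeighbor_eq_some_iff hdeg]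
  rw [deg, this, Set.ncard_image_of_injective _ Sum.inr_injective, Set.ncard_coe_finset]

theorem fromEdgeSet_adj_iff (hbip : IsBipartiteSum G) {c : β → Option α}
    (hc : ∀ i j, c j = some i ↔ G.Adj (.inl i) (.inr j)) (b : α → β) (u v : α ⊕ β) :
    (fromEdgeSet (G.edgeSet ∪ {e | ∃ i, e = s(.inl i, .inr (b i))})).Adj u v ↔
      sumParent b c u = some v ∨ sumParent b c v = some u := by
  rcases u with i | j <;> rcases v with i' | j' <;>
    simp [sumParent, hbip.1, hbip.2, hc, eq_comm, or_comm, G.adj_comm (.inr _)]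

end SimpleGraph

theorem Nat.eq_pow_sub_one_of_mul_eq_pow {x c n : ℕ} (hx : 0 < x) (h : x * c = x ^ n) :
    c = x ^ (n - 1) := by
  cases n with
  | zero => simpa using Nat.eq_one_of_mul_eq_one_left h
  | succ n => exact Nat.eq_of_mul_eq_mul_left hx (h.trans Nat.pow_succ')

theorem blue_extension_count_general (vL : ℕ) (L : Fin vL → ℕ)
    (vR : ℕ) (hvR : vR = 1 + ∑ i, L i)
    (GR : SimpleGraph (Fin vL ⊕ Fin vR))
    (hbip : IsBipartiteSum GR)
    (hdegL : ∀ i : Fin vL, deg GR (Sum.inl i) = L i)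
    (hdegR : ∀ j : Fin vR, deg GR (Sum.inr j) ≤ 1) :
    Nat.card {b : Fin vL → Fin vR //
        (SimpleGraph.fromEdgeSet (GR.edgeSet ∪
          {e | ∃ i : Fin vL, e = s(Sum.inl i, Sum.inr (b i))})).IsTree}
      = vR ^ (vL - 1) := by
  classical
  set w : Option (Fin vL) → ℕ := fun o => #{j | GR.leftNeighbor j = o}
  have hw : ∑ o, w o = vR := by
    simpa using (card_eq_sum_card_fiberwise (f := GR.leftNeighbor) (s := univ) (t := univ)
      (by simp)).symm
  have hw_none : w none = 1 := by
    simp only [Fintype.sum_option, w, card_leftNeighbor_eq_some hbip hdegR, hdegL] at hw ⊢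
    omega
  obtain ⟨r, hr⟩ := card_eq_one.1 hw_none
  have hroot : ∀ j, GR.leftNeighbor j = none ↔ j = r := fun j => by
    simpa [w] using Finset.ext_iff.1 hr j
  rw [Nat.card_congr (Equiv.subtypeEquivRight fun b =>
      (isTree_iff_isRootedForest (r := .inr r)
        (fromEdgeSet_adj_iff hbip (fun _ _ => leftNeighbor_eq_some_iff hdegR) b)
        (by rintro (i | j) <;> simp [sumParent, hroot])).trans
      (isRootedForest_sumParent_iff b GR.leftNeighbor)),
    Nat.card_eq_fintype_card, Fintype.card_subtype,
    card_filter_comp_eq_sum_prod GR.leftNeighbor IsRootedForest]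
  exact Nat.eq_pow_sub_one_of_mul_eq_pow (by omega)
    (by simpa [hw, hw_none] using mul_sum_isRootedForest_prod w)

/-- Given any red graph `G_R` (a bipartite graph in which the `i`-th left vertex has
degree `L_i` and every right vertex has degree at most one), the number of functions
`b : V_L → V_R` such that adding the blue edges `{i, b(i)}` to `G_R` yields a tree
on the full vertex set equals `v_R^(v_L − 1)`; in particular it is independent of the
choice of `G_R`. -/
theorem blue_extension_count (vL : ℕ) (hvL : 0 < vL) (L : Fin vL → ℕ)
    (vR : ℕ) (hvR : vR = 1 + ∑ i, L i)
    (GR : SimpleGraph (Fin vL ⊕ Fin vR))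
    (hbip : IsBipartiteSum GR)
    (hdegL : ∀ i : Fin vL, deg GR (Sum.inl i) = L i)
    (hdegR : ∀ j : Fin vR, deg GR (Sum.inr j) ≤ 1) :
    Nat.card {b : Fin vL → Fin vR //
        (SimpleGraph.fromEdgeSet (GR.edgeSet ∪
          {e | ∃ i : Fin vL, e = s(Sum.inl i, Sum.inr (b i))})).IsTree}
      = vR ^ (vL - 1) :=
  blue_extension_count_general vL L vR hvR GR hbip hdegL hdegR
end

section
/- Let ν be a positive integer and L_{0a}, L_{0b}, L_1, …, L_{ν−1} non-negative integers. Set L^{(1)} = (L_{0a} + L_{0b}, L_1, …, L_{ν−1}), a vector with ν components, and L^{(2)} = (L_{0a}, L_{0b}, L_1, …, L_{ν−1}), a vector with ν + 1 components; both determine the same number v_R = 1 + L_{0a} + L_{0b} + Σ_{i=1}^{ν−1} L_i of right vertices. Let G_R^{(1)} (respectively G_R^{(2)}) be the red graph on the corresponding left vertex set and on V_R = {1, …, v_R} in which each left vertex is joined to its prescribed number of right vertices taken in consecutive blocks, in the order the components are listed, so that the last right vertex v_R is incident to no red edge. Let B(L^{(I)}) denote the number of functions b from the left vertex set of L^{(I)}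 to V_R such that the simple bipartite graph with edge set E(G_R^{(I)}) ∪ {{i, b(i)}} is a tree on the full vertex set. Then B(L^{(2)}) = v_R · B(L^{(1)}). -/
/-!
The red-plus-blue graph is the functional graph of the parent map sending a left vertex `i` to
`b i` and a right vertex to the left vertex of its block, the last right vertex `r` being its own
parent. Such a graph is a tree iff iterating the parent map leads every vertex to `r`, i.e. iff the
map `j ↦ b (block j)` on right vertices leads every right vertex to `r`.

Fix `b` on the left vertices `L_1, …, L_{ν-1}` and let every right vertex follow this map until it
stops in `r` or in the first block. If some vertex never stops, neither vector gives a tree.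
Otherwise let `P`, `Qa`, `Qb` be the vertices stopping at `r`, in the first `L_{0a}` and in the last
`L_{0b}` vertices of the first block. A merged vertex with target `d` gives a tree iff `d ∈ P`;
split vertices with targets `x`, `y` give a tree iff `x ∈ P, y ∈ P ∪ Qa` or `x ∈ Qb, y ∈ P`, for
otherwise a redirected point lies on a cycle. This makes `|P| (|P| + |Qa| + |Qb|) = v_R |P|` pairs.
-/

/-- The "consecutive-blocks" red graph for a vector `ℓ : Fin p → ℕ` of left degrees:
the `i`-th left vertex is joined to the block of right vertices with indices in
`[∑_{i' < i} ℓ i', ∑_{i' < i} ℓ i' + ℓ i)`, so the blocks are consecutive in the order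
the components are listed and (when `v_R = 1 + ∑ ℓ`) the last right vertex is incident
to no red edge. -/
def consecRed (p : ℕ) (ℓ : Fin p → ℕ) (vR : ℕ) : SimpleGraph (Fin p ⊕ Fin vR) :=
  SimpleGraph.fromEdgeSet {e | ∃ (i : Fin p) (j : Fin vR),
    e = s(Sum.inl i, Sum.inr j) ∧
    (∑ i' ∈ Finset.univ.filter (fun i' => i' < i), ℓ i') ≤ (j : ℕ) ∧
    (j : ℕ) < (∑ i' ∈ Finset.univ.filter (fun i' => i' < i), ℓ i') + ℓ i}

/-- `Bcount p ℓ vR` is the number of functions `b` from the left vertices to the right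
vertices such that adding the blue edges `{i, b(i)}` to the consecutive-blocks red graph
of `ℓ` yields a tree on the full vertex set. -/
noncomputable def Bcount (p : ℕ) (ℓ : Fin p → ℕ) (vR : ℕ) : ℕ :=
  Nat.card {b : Fin p → Fin vR //
    (SimpleGraph.fromEdgeSet ((consecRed p ℓ vR).edgeSet ∪
      {e | ∃ i : Fin p, e = s(Sum.inl i, Sum.inr (b i))})).IsTree}

def Reaches {X : Type*} (f : X → X) : X → X → Prop :=
  Relation.ReflTransGen fun a b => f a = b

namespace Reaches

variable {X : Type*} {f g : X → X} {a b c r : X}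

lemma refl (f : X → X) (a : X) : Reaches f a a := Relation.ReflTransGen.refl

lemma head (h : Reaches f (f a) b) : Reaches f a b := Relation.ReflTransGen.head rfl h

lemma tail (h : Reaches f a b) : Reaches f a (f b) := Relation.ReflTransGen.tail h rfl

lemma trans (h₁ : Reaches f a b) (h₂ : Reaches f b c) : Reaches f a c :=
  Relation.ReflTransGen.trans h₁ h₂

lemma step_of_ne (h : Reaches f a b) (hab : a ≠ b) : Reaches f (f a) b := by
  rcases h.cases_head with rfl | ⟨c, rfl, h⟩
  · exact absurd rfl hab
  · exact h

lemma eq_of_isFixedPt (ha : f a = a) (h : Reaches f a b) : b = a := by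
  induction h with
  | refl => rfl
  | tail _ hcd ih => rw [← hcd, ih, ha]

lemma total (hab : Reaches f a b) (hac : Reaches f a c) : Reaches f b c ∨ Reaches f c b := by
  induction hab using Relation.ReflTransGen.head_induction_on with
  | refl => exact .inl hac
  | head had hdb ih =>
    rcases hac.cases_head with rfl | ⟨d, hd, hdc⟩
    · exact .inr (Relation.ReflTransGen.head had hdb)
    · exact ih (had ▸ hd ▸ hdc)

lemma isFixedPt_unique (hb : f b = b) (hc : f c = c) (hab : Reaches f a b)
    (hac : Reaches f a c) : b = c := by
  rcases total hab hac with h | h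
  · exact (eq_of_isFixedPt hb h).symm
  · exact eq_of_isFixedPt hc h

lemma reaches_of_periodic (hper : Reaches f (f a) a) (h : Reaches f a b) : Reaches f b a := by
  induction h with
  | refl => exact refl f a
  | @tail c _ _ hcd ih =>
    subst hcd
    by_cases hca : c = a
    · exact hca ▸ hper
    · exact ih.step_of_ne hca

lemma eq_of_periodic (hr : f r = r) (hper : Reaches f (f a) a) (h : Reaches f a r) : a = r :=
  eq_of_isFixedPt hr (reaches_of_periodic hper h)

lemma of_agree (hfg : ∀ x, f x ≠ x → g x = f x) (h : Reaches f a b) : Reaches g a b := by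
  induction h with
  | refl => exact refl g a
  | @tail c d _ hcd ih =>
    by_cases hc : f c = c
    · rw [← hcd, hc]; exact ih
    · rw [← hcd, ← hfg c hc]; exact ih.tail

end Reaches

lemma SimpleGraph.Reachable.of_adj_closed {V : Type*} {G : SimpleGraph V} {P : V → Prop}
    (hP : ∀ u w, G.Adj u w → P u → P w) {u w : V} (h : G.Reachable u w) (hu : P u) : P w := by
  replace h := (G.reachable_iff_reflTransGen u w).1 h
  induction h with
  | refl => exact hu
  | tail _ hadj ih => exact hP _ _ hadj ih

section FunctionalGraph

variable {V : Type*} (π : V → V)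

def functionalGraph : SimpleGraph V := SimpleGraph.fromEdgeSet (Set.range fun v => s(v, π v))

variable {π}

lemma functionalGraph_adj {u w : V} :
    (functionalGraph π).Adj u w ↔ (π u = w ∨ π w = u) ∧ u ≠ w := by
  simp only [functionalGraph, SimpleGraph.fromEdgeSet_adj, Set.mem_range, Sym2.eq_iff]
  constructor
  · rintro ⟨⟨v, ⟨rfl, rfl⟩ | ⟨rfl, rfl⟩⟩, hne⟩
    · exact ⟨.inl rfl, hne⟩
    · exact ⟨.inr rfl, hne⟩
  · rintro ⟨rfl | rfl, hne⟩
    · exact ⟨⟨u, .inl ⟨rfl, rfl⟩⟩, hne⟩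
    · exact ⟨⟨w, .inr ⟨rfl, rfl⟩⟩, hne⟩

lemma reaches_of_functionalGraph_adj {r u w : V} (hr : π r = r)
    (hadj : (functionalGraph π).Adj u w) (hu : Reaches π u r) : Reaches π w r := by
  obtain ⟨rfl | rfl, -⟩ := functionalGraph_adj.1 hadj
  · by_cases hur : u = r
    · subst hur; rwa [hr]
    · exact hu.step_of_ne hur
  · exact hu.head

lemma functionalGraph_reachable_of_reaches {u w : V} (h : Reaches π u w) :
    (functionalGraph π).Reachable u w := by
  induction h with
  | refl => rfl
  | @tail c _ _ hcd ih =>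
    subst hcd
    by_cases hc : π c = c
    · rwa [hc]
    · exact ih.trans (functionalGraph_adj.2 ⟨.inl rfl, Ne.symm hc⟩).reachable

/-- The vertices from which `v` is reached are closed under the edges other than `{v, π v}`, and
`π v` is not among them since `v` lies on no cycle. -/
lemma isBridge_functionalGraph {r v : V} (hr : π r = r) (hreach : ∀ v, Reaches π v r)
    (hv : π v ≠ v) : (functionalGraph π).IsBridge s(v, π v) := by
  rw [SimpleGraph.isBridge_iff]
  intro h
  refine hv ?_
  suffices Reaches π (π v) v by rw [Reaches.eq_of_periodic hr this (hreach v), hr]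
  refine h.of_adj_closed (P := fun u => Reaches π u v) ?_ (Reaches.refl π v)
  intro u w hadj hu
  rw [SimpleGraph.deleteEdges_adj, Set.mem_singleton_iff] at hadj
  obtain ⟨rfl | rfl, -⟩ := functionalGraph_adj.1 hadj.1
  · by_cases huv : u = v
    · subst huv; exact absurd rfl hadj.2
    · exact hu.step_of_ne huv
  · exact hu.head

theorem isTree_functionalGraph_iff {r : V} (hr : π r = r) :
    (functionalGraph π).IsTree ↔ ∀ v, Reaches π v r := by
  constructor
  · intro h v
    exact (h.connected r v).of_adj_closed (fun _ _ => reaches_of_functionalGraph_adj hr)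
      (Reaches.refl π r)
  · intro h
    refine ⟨(functionalGraph π).connected_iff_exists_forall_reachable.2
      ⟨r, fun v => (functionalGraph_reachable_of_reaches (h v)).symm⟩, ?_⟩
    rw [SimpleGraph.isAcyclic_iff_forall_adj_isBridge]
    intro u w hadj
    obtain ⟨rfl | rfl, hne⟩ := functionalGraph_adj.1 hadj
    · exact isBridge_functionalGraph hr h (Ne.symm hne)
    · rw [Sym2.eq_swap]; exact isBridge_functionalGraph hr h hne

end FunctionalGraph

section Bipartite

variable {α β : Type*} (c : β → Option α) (b : α → β)

def bipartiteParent : α ⊕ β → α ⊕ β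
  | .inl a => .inr (b a)
  | .inr j => (c j).elim (.inr j) .inl

def grandparent (j : β) : β := (c j).elim j b

variable {c}

@[simp]
lemma bipartiteParent_inl (a : α) : bipartiteParent c b (.inl a) = .inr (b a) := rfl

lemma bipartiteParent_inr_eq_inl {j : β} {a : α} :
    bipartiteParent c b (.inr j) = .inl a ↔ c j = some a := by
  cases hj : c j <;> simp [bipartiteParent, hj]

lemma bipartiteParent_inr_eq_inr {j k : β} :
    bipartiteParent c b (.inr j) = .inr k ↔ c j = none ∧ j = k := by
  cases hj : c j <;> simp [bipartiteParent, hj]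

lemma bipartiteParent_bipartiteParent_inr (j : β) :
    bipartiteParent c b (bipartiteParent c b (.inr j)) = .inr (grandparent c b j) := by
  cases hj : c j <;> simp [bipartiteParent, grandparent, hj]

lemma elim_bipartiteParent_inr (j : β) :
    Sum.elim b id (bipartiteParent c b (.inr j)) = grandparent c b j := by
  cases hj : c j <;> simp [bipartiteParent, grandparent, hj]

lemma reaches_bipartiteParent_inr {j r : β} (h : Reaches (grandparent c b) j r) :
    Reaches (bipartiteParent c b) (.inr j) (.inr r) := by
  induction h with
  | refl => exact Reaches.refl _ _
  | tail _ hjk ih =>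
    subst hjk
    refine ih.trans (Reaches.head (Reaches.head ?_))
    rw [bipartiteParent_bipartiteParent_inr]
    exact Reaches.refl _ _

theorem forall_reaches_bipartiteParent_iff {r : β} :
    (∀ v, Reaches (bipartiteParent c b) v (.inr r)) ↔ ∀ j, Reaches (grandparent c b) j r := by
  constructor
  · intro h j
    have key (v) (hv : Reaches (bipartiteParent c b) v (.inr r)) :
        Reaches (grandparent c b) (Sum.elim b id v) r := by
      induction hv using Relation.ReflTransGen.head_induction_on with
      | refl => exact Reaches.refl _ _
      | @head v _ hvw _ ih =>
        subst hvw
        rcases v with a | k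
        · exact ih
        · rw [elim_bipartiteParent_inr] at ih
          exact ih.head
    exact key (.inr j) (h (.inr j))
  · rintro h (a | j)
    · exact Reaches.head (reaches_bipartiteParent_inr b (h (b a)))
    · exact reaches_bipartiteParent_inr b (h j)

end Bipartite

section Blocks

variable {p : ℕ} (ℓ : Fin p → ℕ)

def blockStart (i : Fin p) : ℕ := ∑ i' ∈ Finset.univ.filter (fun i' => i' < i), ℓ i'

def InBlock (i : Fin p) (j : ℕ) : Prop := blockStart ℓ i ≤ j ∧ j < blockStart ℓ i + ℓ i

instance (i : Fin p) (j : ℕ) : Decidable (InBlock ℓ i j) := inferInstanceAs (Decidable (_ ∧ _))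

def blockOf (j : ℕ) : Option (Fin p) := Fin.find? fun i => decide (InBlock ℓ i j)

variable {ℓ}

lemma blockStart_add_eq_sum_Iic (i : Fin p) :
    blockStart ℓ i + ℓ i = ∑ i' ∈ Finset.Iic i, ℓ i' := by
  rw [blockStart, Finset.filter_gt_eq_Iio, Finset.Iic_eq_cons_Iio, Finset.sum_cons, add_comm]

lemma blockStart_add_le_of_lt {i i' : Fin p} (h : i < i') :
    blockStart ℓ i + ℓ i ≤ blockStart ℓ i' := by
  rw [blockStart_add_eq_sum_Iic, blockStart, Finset.filter_gt_eq_Iio]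
  exact Finset.sum_le_sum_of_subset fun x hx =>
    Finset.mem_Iio.2 ((Finset.mem_Iic.1 hx).trans_lt h)

lemma blockStart_add_le_sum (i : Fin p) : blockStart ℓ i + ℓ i ≤ ∑ i', ℓ i' := by
  rw [blockStart_add_eq_sum_Iic]
  exact Finset.sum_le_sum_of_subset (Finset.subset_univ _)

lemma InBlock.unique {i i' : Fin p} {j : ℕ} (h : InBlock ℓ i j) (h' : InBlock ℓ i' j) :
    i = i' := by
  unfold InBlock at h h'
  rcases lt_trichotomy i i' with hlt | rfl | hlt
  · have := blockStart_add_le_of_lt (ℓ := ℓ) hlt; omega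
  · rfl
  · have := blockStart_add_le_of_lt (ℓ := ℓ) hlt; omega

lemma blockOf_eq_some_iff {i : Fin p} {j : ℕ} : blockOf ℓ j = some i ↔ InBlock ℓ i j := by
  rw [blockOf, Fin.find?_eq_some_iff, decide_eq_true_iff]
  refine ⟨And.left, fun h => ⟨h, fun i' hi' => ?_⟩⟩
  rw [decide_eq_false_iff_not]
  exact fun h' => hi'.ne (h'.unique h)

lemma blockOf_eq_none_of_sum_le {j : ℕ} (hj : ∑ i, ℓ i ≤ j) : blockOf ℓ j = none := by
  rw [blockOf, Fin.find?_eq_none_iff]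
  intro i
  rw [decide_eq_false_iff_not]
  have := blockStart_add_le_sum (ℓ := ℓ) i
  unfold InBlock
  omega

lemma blockStart_cons_zero (x : ℕ) (f : Fin p → ℕ) :
    blockStart (Fin.cons x f : Fin (p + 1) → ℕ) 0 = 0 := by
  simp [blockStart]

lemma blockStart_cons_succ (x : ℕ) (f : Fin p → ℕ) (i : Fin p) :
    blockStart (Fin.cons x f : Fin (p + 1) → ℕ) i.succ = x + blockStart f i := by
  simp [blockStart, Finset.sum_filter, Fin.sum_univ_succ, Fin.succ_lt_succ_iff]

lemma blockOf_cons_add {m : ℕ} (A B : ℕ) (Ls : Fin m → ℕ) (j : ℕ) :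
    blockOf (Fin.cons (A + B) Ls : Fin (m + 1) → ℕ) j
      = (blockOf (Fin.cons A (Fin.cons B Ls) : Fin (m + 2) → ℕ) j).map (Fin.cons 0 id) := by
  refine Option.ext fun i => ?_
  rw [Option.map_eq_some_iff]
  simp only [blockOf_eq_some_iff]
  cases i using Fin.cases with
  | zero =>
    simp [Fin.exists_fin_succ, InBlock, blockStart_cons_zero, blockStart_cons_succ]
    omega
  | succ i =>
    simp [Fin.exists_fin_succ, InBlock, blockStart_cons_zero, blockStart_cons_succ,
      (Fin.succ_ne_zero _).symm]
    omega

end Blocks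

lemma fromEdgeSet_consecRed_union_eq_functionalGraph {p : ℕ} (ℓ : Fin p → ℕ) {vR : ℕ}
    (b : Fin p → Fin vR) :
    SimpleGraph.fromEdgeSet ((consecRed p ℓ vR).edgeSet ∪
      {e | ∃ i : Fin p, e = s(Sum.inl i, Sum.inr (b i))})
      = functionalGraph (bipartiteParent (fun j : Fin vR => blockOf ℓ j) b) := by
  ext u w
  rw [SimpleGraph.fromEdgeSet_adj, functionalGraph_adj, consecRed,
    SimpleGraph.edgeSet_fromEdgeSet]
  rcases u with i | j <;> rcases w with i' | j'
  all_goals simp [bipartiteParent_inr_eq_inl, bipartiteParent_inr_eq_inr, blockOf_eq_some_iff,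
    InBlock, blockStart]
  all_goals grind

theorem Bcount_eq_natCard_reaches {p : ℕ} (ℓ : Fin p → ℕ) {vR : ℕ} (root : Fin vR)
    (hroot : (root : ℕ) = ∑ i, ℓ i) :
    Bcount p ℓ vR = Nat.card {b : Fin p → Fin vR //
      ∀ j, Reaches (grandparent (fun j : Fin vR => blockOf ℓ j) b) j root} := by
  refine Nat.card_congr (Equiv.subtypeEquivRight fun b => ?_)
  have hfix : bipartiteParent (fun j : Fin vR => blockOf ℓ j) b (.inr root) = .inr root := by
    simp [bipartiteParent, blockOf_eq_none_of_sum_le hroot.ge]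
  rw [fromEdgeSet_consecRed_union_eq_functionalGraph, isTree_functionalGraph_iff hfix,
    forall_reaches_bipartiteParent_iff]

section Basin

variable {X : Type*} (f : X → X)

def basin (Z : Set X) : Set X := {j | ∃ z ∈ Z, Reaches f j z}

variable {f}

@[simp]
lemma mem_basin_singleton {j r : X} : j ∈ basin f {r} ↔ Reaches f j r := by
  simp [basin]

lemma basin_union (A B : Set X) : basin f (A ∪ B) = basin f A ∪ basin f B := by
  ext j
  simp only [basin, Set.mem_union, Set.mem_ofPred_eq, or_and_right, exists_or]

lemma self_mem_basin {Z : Set X} {z : X} (hz : z ∈ Z) : z ∈ basin f Z := ⟨z, hz, .refl f z⟩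

lemma mem_basin_of_apply {Z : Set X} {j : X} (h : f j ∈ basin f Z) : j ∈ basin f Z :=
  let ⟨z, hz, hjz⟩ := h; ⟨z, hz, hjz.head⟩

lemma disjoint_basin {A B : Set X} (hA : ∀ z ∈ A, f z = z) (hB : ∀ z ∈ B, f z = z)
    (hAB : Disjoint A B) : Disjoint (basin f A) (basin f B) := by
  refine Set.disjoint_left.2 fun j ⟨a, ha, hja⟩ ⟨b, hb, hjb⟩ => ?_
  exact Set.disjoint_left.1 hAB ha (Reaches.isFixedPt_unique (hA a ha) (hB b hb) hja hjb ▸ hb)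

end Basin

section Redirect

variable {X : Type*} (s : X → X) (Za Zb : Set X) [DecidablePred (· ∈ Za)]
  [DecidablePred (· ∈ Zb)]

def redirect (x y j : X) : X := if j ∈ Za then x else if j ∈ Zb then y else s j

def stopAt (j : X) : X := redirect s Za Zb j j j

variable {s Za Zb} {r x y : X}

lemma redirect_eq_stopAt (x y : X) {j : X} (hj : stopAt s Za Zb j ≠ j) :
    redirect s Za Zb x y j = stopAt s Za Zb j := by
  unfold stopAt redirect at *
  split_ifs at * <;> simp_all

lemma stopAt_of_mem {z : X} (hz : z ∈ Za ∪ Zb) : stopAt s Za Zb z = z := by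
  unfold stopAt redirect
  split_ifs <;> simp_all

lemma stopAt_of_notMem {z : X} (hz : z ∉ Za ∪ Zb) : stopAt s Za Zb z = s z := by
  unfold stopAt redirect
  simp_all

lemma redirect_of_mem_left {z : X} (hz : z ∈ Za) : redirect s Za Zb x y z = x := by
  simp [redirect, hz]

lemma redirect_of_mem_right (hab : Disjoint Za Zb) {z : X} (hz : z ∈ Zb) :
    redirect s Za Zb x y z = y := by
  simp [redirect, hz, hab.notMem_of_mem_right hz]

lemma redirect_of_notMem {j : X} (hj : j ∉ Za ∪ Zb) : redirect s Za Zb x y j = s j := by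
  rw [Set.mem_union, not_or] at hj
  rw [redirect, if_neg hj.1, if_neg hj.2]

lemma Reaches.redirect_of_stopAt {j w : X} (h : Reaches (stopAt s Za Zb) j w) :
    Reaches (redirect s Za Zb x y) j w :=
  h.of_agree fun _ => redirect_eq_stopAt x y

lemma reaches_redirect_left_of_mem_basin {j : X} (h : j ∈ basin (stopAt s Za Zb) Za) :
    Reaches (redirect s Za Zb x y) j x := by
  obtain ⟨z, hz, hjz⟩ := h
  simpa [redirect_of_mem_left hz] using hjz.redirect_of_stopAt.tail

lemma reaches_redirect_right_of_mem_basin (hab : Disjoint Za Zb) {j : X}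
    (h : j ∈ basin (stopAt s Za Zb) Zb) : Reaches (redirect s Za Zb x y) j y := by
  obtain ⟨z, hz, hjz⟩ := h
  simpa [redirect_of_mem_right hab hz] using hjz.redirect_of_stopAt.tail

lemma mem_basin_stopAt_of_reaches_redirect {j : X} (h : Reaches (redirect s Za Zb x y) j r) :
    j ∈ basin (stopAt s Za Zb) {r} ∪ basin (stopAt s Za Zb) Za ∪ basin (stopAt s Za Zb) Zb := by
  rw [← basin_union, ← basin_union]
  induction h using Relation.ReflTransGen.head_induction_on with
  | refl => exact self_mem_basin (by simp)
  | @head j k hjk _ ih =>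
    by_cases hj : j ∈ Za ∪ Zb
    · exact self_mem_basin (by rw [Set.union_assoc]; exact Set.mem_union_right _ hj)
    · refine mem_basin_of_apply ?_
      rwa [stopAt_of_notMem hj, ← redirect_of_notMem (s := s) (x := x) (y := y) hj, hjk]

lemma mem_basin_of_forall_reaches_redirect (hr : s r = r) (hrZ : r ∉ Za ∪ Zb)
    (hab : Disjoint Za Zb) (h : ∀ j, Reaches (redirect s Za Zb x y) j r) :
    x ∈ basin (stopAt s Za Zb) {r} ∧ y ∈ basin (stopAt s Za Zb) {r} ∪ basin (stopAt s Za Zb) Za ∨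
      x ∈ basin (stopAt s Za Zb) Zb ∧ y ∈ basin (stopAt s Za Zb) {r} := by
  have hfix : redirect s Za Zb x y r = r := by rw [redirect_of_notMem hrZ, hr]
  have no_cycle {z : X} (hz : z ∈ Za ∪ Zb)
      (hper : Reaches (redirect s Za Zb x y) (redirect s Za Zb x y z) z) : False :=
    hrZ (Reaches.eq_of_periodic hfix hper (h z) ▸ hz)
  have hx : x ∉ basin (stopAt s Za Zb) Za := fun ⟨z, hz, hxz⟩ =>
    no_cycle (.inl hz) (by rw [redirect_of_mem_left hz]; exact hxz.redirect_of_stopAt)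
  have hy : y ∉ basin (stopAt s Za Zb) Zb := fun ⟨z, hz, hyz⟩ =>
    no_cycle (.inr hz) (by rw [redirect_of_mem_right hab hz]; exact hyz.redirect_of_stopAt)
  have hxy : ¬ (x ∈ basin (stopAt s Za Zb) Zb ∧ y ∈ basin (stopAt s Za Zb) Za) :=
    fun ⟨⟨zb, hzb, hxzb⟩, hya⟩ => no_cycle (.inr hzb) <| by
      rw [redirect_of_mem_right hab hzb]
      exact (reaches_redirect_left_of_mem_basin hya).trans hxzb.redirect_of_stopAt
  have := mem_basin_stopAt_of_reaches_redirect (h x)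
  have := mem_basin_stopAt_of_reaches_redirect (h y)
  simp only [Set.mem_union] at *
  tauto

theorem forall_reaches_redirect_iff (hr : s r = r) (hrZ : r ∉ Za ∪ Zb)
    (hab : Disjoint Za Zb) :
    (∀ j, Reaches (redirect s Za Zb x y) j r) ↔
      (∀ j, j ∈ basin (stopAt s Za Zb) {r} ∪ basin (stopAt s Za Zb) Za ∪
        basin (stopAt s Za Zb) Zb) ∧
      (x ∈ basin (stopAt s Za Zb) {r} ∧ y ∈ basin (stopAt s Za Zb) {r} ∪ basin (stopAt s Za Zb) Za ∨
        x ∈ basin (stopAt s Za Zb) Zb ∧ y ∈ basin (stopAt s Za Zb) {r}) := by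
  refine ⟨fun h => ⟨fun j => mem_basin_stopAt_of_reaches_redirect (h j),
    mem_basin_of_forall_reaches_redirect hr hrZ hab h⟩, ?_⟩
  simp only [Set.mem_union, mem_basin_singleton]
  rintro ⟨hall, hpair⟩
  have hxy : Reaches (redirect s Za Zb x y) x r ∧ Reaches (redirect s Za Zb x y) y r := by
    rcases hpair with ⟨hx, hy | hy⟩ | ⟨hx, hy⟩
    · exact ⟨hx.redirect_of_stopAt, hy.redirect_of_stopAt⟩
    · exact ⟨hx.redirect_of_stopAt,
        (reaches_redirect_left_of_mem_basin hy).trans hx.redirect_of_stopAt⟩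
    · exact ⟨(reaches_redirect_right_of_mem_basin hab hx).trans hy.redirect_of_stopAt,
        hy.redirect_of_stopAt⟩
  intro j
  rcases hall j with (hj | hj) | hj
  · exact hj.redirect_of_stopAt
  · exact (reaches_redirect_left_of_mem_basin hj).trans hxy.1
  · exact (reaches_redirect_right_of_mem_basin hab hj).trans hxy.2

theorem ncard_reaches_redirect [Finite X] (hr : s r = r) (hrZ : r ∉ Za ∪ Zb)
    (hab : Disjoint Za Zb) :
    {p : X × X | ∀ j, Reaches (redirect s Za Zb p.1 p.2) j r}.ncard
      = Nat.card X * {d | ∀ j, Reaches (redirect s Za Zb d d) j r}.ncard := by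
  have hfr : ∀ z ∈ ({r} : Set X), stopAt s Za Zb z = z := by
    rintro z rfl; rw [stopAt_of_notMem hrZ, hr]
  have hfa : ∀ z ∈ Za, stopAt s Za Zb z = z := fun z hz => stopAt_of_mem (.inl hz)
  have hfb : ∀ z ∈ Zb, stopAt s Za Zb z = z := fun z hz => stopAt_of_mem (.inr hz)
  simp only [forall_reaches_redirect_iff hr hrZ hab]
  set P := basin (stopAt s Za Zb) {r}
  set Qa := basin (stopAt s Za Zb) Za
  set Qb := basin (stopAt s Za Zb) Zb
  by_cases hall : ∀ j, j ∈ P ∪ Qa ∪ Qb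
  swap
  · simp only [hall, false_and, Set.ofPred_false, Set.ncard_empty, mul_zero]
  have hPQa : Disjoint P Qa :=
    disjoint_basin hfr hfa (Set.disjoint_singleton_left.2 fun h => hrZ (.inl h))
  have hPQb : Disjoint P Qb :=
    disjoint_basin hfr hfb (Set.disjoint_singleton_left.2 fun h => hrZ (.inr h))
  have hQab : Disjoint Qa Qb := disjoint_basin hfa hfb hab
  have hD : {d | d ∈ P ∧ d ∈ P ∪ Qa ∨ d ∈ Qb ∧ d ∈ P} = P := by
    ext d
    simp only [Set.mem_union, Set.mem_ofPred_eq]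
    tauto
  have hcover : P ∪ Qa ∪ Qb = Set.univ := Set.eq_univ_of_forall hall
  simp only [hall, implies_true, true_and, hD]
  change (P ×ˢ (P ∪ Qa) ∪ Qb ×ˢ P).ncard = _
  rw [Set.ncard_union_eq (Set.disjoint_prod.2 (.inl hPQb)), Set.ncard_prod, Set.ncard_prod,
    ← Set.ncard_univ, ← hcover, Set.ncard_union_eq (Set.disjoint_union_left.2 ⟨hPQb, hQab⟩),
    Set.ncard_union_eq hPQa]
  ring

end Redirect

section Split

variable {X : Type*} {m : ℕ}

lemma natCard_subtype_prod {Y : Type*} [Fintype X] [Fintype Y] (Q : X × Y → Prop) :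
    Nat.card {q // Q q} = ∑ y, Nat.card {x // Q (x, y)} := by
  classical
  simp only [Nat.card_eq_fintype_card, Fintype.card_subtype, Finset.card_filter]
  exact Fintype.sum_prod_type_right _

lemma natCard_subtype_pi_fin_succ [Fintype X] (Q : (Fin (m + 1) → X) → Prop) :
    Nat.card {b // Q b} = ∑ t : Fin m → X, Nat.card {x // Q (Fin.cons x t)} := by
  rw [← natCard_subtype_prod fun q : X × (Fin m → X) => Q (Fin.cons q.1 q.2)]
  exact Nat.card_congr ((Fin.consEquiv fun _ => X).symm.subtypeEquiv fun b => by simp)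

lemma natCard_subtype_pi_fin_succ_succ [Fintype X] (Q : (Fin (m + 2) → X) → Prop) :
    Nat.card {b // Q b}
      = ∑ t : Fin m → X, Nat.card {p : X × X // Q (Fin.cons p.1 (Fin.cons p.2 t))} := by
  rw [← natCard_subtype_prod fun q : (X × X) × (Fin m → X) =>
    Q (Fin.cons q.1.1 (Fin.cons q.1.2 q.2))]
  let e : (Fin (m + 2) → X) ≃ (X × X) × (Fin m → X) :=
    (Fin.consEquiv fun _ => X).symm.trans <|
      ((Equiv.refl X).prodCongr (Fin.consEquiv fun _ => X).symm).trans
        (Equiv.prodAssoc X X _).symm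
  exact Nat.card_congr (e.subtypeEquiv fun b => by simp [e])

lemma grandparent_cons_cons (c : X → Option (Fin (m + 2))) (x y x' y' : X) (t : Fin m → X) :
    grandparent c (Fin.cons x (Fin.cons y t))
      = redirect (grandparent c (Fin.cons x' (Fin.cons y' t))) {j | c j = some 0}
          {j | c j = some 1} x y := by
  funext j
  rcases hj : c j with _ | i
  · simp [grandparent, redirect, hj]
  · cases i using Fin.cases with
    | zero => simp [grandparent, redirect, hj]
    | succ i =>
      cases i using Fin.cases with
      | zero => simp [grandparent, redirect, hj]
      | succ i => simp [grandparent, redirect, hj, Fin.succ_succ_ne_one]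

lemma grandparent_map {ι κ : Type*} (c : X → Option ι) (μ : ι → κ) (b : κ → X) :
    grandparent (Option.map μ ∘ c) b = grandparent c (b ∘ μ) := by
  funext j
  cases hj : c j <;> simp [grandparent, hj]

lemma cons_comp_cons_zero_id (d : X) (t : Fin m → X) :
    (Fin.cons d t : Fin (m + 1) → X) ∘ (Fin.cons 0 id : Fin (m + 2) → Fin (m + 1))
      = Fin.cons d (Fin.cons d t) := by
  funext k
  cases k using Fin.cases with
  | zero => rfl
  | succ k => cases k using Fin.cases <;> rfl

theorem natCard_reaches_grandparent_split [Fintype X] (c : X → Option (Fin (m + 2))) {r : X}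
    (hr : c r = none) :
    Nat.card {b : Fin (m + 2) → X // ∀ j, Reaches (grandparent c b) j r}
      = Nat.card X * Nat.card {b : Fin (m + 1) → X //
          ∀ j, Reaches (grandparent (Option.map (Fin.cons 0 id) ∘ c) b) j r} := by
  rw [natCard_subtype_pi_fin_succ_succ, natCard_subtype_pi_fin_succ, Finset.mul_sum]
  refine Finset.sum_congr rfl fun t _ => ?_
  set s := grandparent c (Fin.cons r (Fin.cons r t))
  have hs (x y : X) : grandparent c (Fin.cons x (Fin.cons y t))
      = redirect s {j | c j = some 0} {j | c j = some 1} x y :=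
    grandparent_cons_cons c x y r r t
  simp only [grandparent_map, cons_comp_cons_zero_id, hs]
  have hsr : s r = r := by simp [s, grandparent, hr]
  have hrZ : r ∉ {j | c j = some 0} ∪ {j | c j = some 1} := by simp [hr]
  have hab : Disjoint {j | c j = some 0} {j | c j = some 1} :=
    Set.disjoint_left.2 fun j h0 h1 => by simp_all
  exact ncard_reaches_redirect hsr hrZ hab

end Split

/-- Splitting the first left vertex: with `L^{(1)} = (L_{0a}+L_{0b}, L_1, …, L_{ν−1})`
(`ν = m+1` components) and `L^{(2)} = (L_{0a}, L_{0b}, L_1, …, L_{ν−1})` (`ν+1`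
components), both with `v_R = 1 + L_{0a} + L_{0b} + ∑ L_i` right vertices and the
consecutive-blocks red graphs, one has `B(L^{(2)}) = v_R · B(L^{(1)})`. -/
theorem Bcount_split (m : ℕ) (L0a L0b : ℕ) (Ls : Fin m → ℕ)
    (vR : ℕ) (hvR : vR = 1 + (L0a + L0b + ∑ i, Ls i)) :
    Bcount (m + 2) (Fin.cons L0a (Fin.cons L0b Ls)) vR
      = vR * Bcount (m + 1) (Fin.cons (L0a + L0b) Ls) vR := by
  let root : Fin vR := ⟨L0a + L0b + ∑ i, Ls i, by omega⟩
  have hsplit : (root : ℕ) = ∑ i, (Fin.cons L0a (Fin.cons L0b Ls) : Fin (m + 2) → ℕ) i := by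
    simp [root, Fin.sum_cons, add_assoc]
  have hmerged : (root : ℕ) = ∑ i, (Fin.cons (L0a + L0b) Ls : Fin (m + 1) → ℕ) i := by
    simp [root, Fin.sum_cons]
  have hmap : Option.map (Fin.cons 0 id) ∘
      (fun j : Fin vR => blockOf (Fin.cons L0a (Fin.cons L0b Ls)) j)
        = fun j : Fin vR => blockOf (Fin.cons (L0a + L0b) Ls) j :=
    funext fun j => (blockOf_cons_add L0a L0b Ls j).symm
  rw [Bcount_eq_natCard_reaches _ root hsplit, Bcount_eq_natCard_reaches _ root hmerged,
    natCard_reaches_grandparent_split (fun j : Fin vR => blockOf _ j) (r := root)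
      (blockOf_eq_none_of_sum_le hsplit.ge), hmap, Nat.card_fin]
end

section
/- For all positive integers k and n, the identity Σ_{ℓ=1}^{n} ((−1)^{ℓ−1} (ℓ+1)/ℓ²) · C(kℓ, ℓ+1) · C((k−1)ℓ, n−ℓ) = (−1)^{n−1} k(k−1)/n holds in the rational numbers. Equivalently, the formal power series F(k,1,x) satisfies F(k, 1, y(1+y)^{k−1}) = k(k−1) log(1+y) as formal power series in y over ℚ. -/
/-!
Since `(ℓ + 1) C(kℓ, ℓ + 1) = (k - 1) ℓ C(kℓ, ℓ)`, `C(kℓ, ℓ) C((k - 1)ℓ, n - ℓ) = C(n, ℓ) C(kℓ, n)`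
and `n C(kℓ, n) = kℓ C(kℓ - 1, n - 1)`, the `ℓ`-th summand is `k (k - 1) / n` times
`(-1)^(ℓ - 1) C(n, ℓ) C(kℓ - 1, n - 1)`. For `ℓ ≥ 1` the last binomial coefficient is the value at `ℓ`
of the polynomial `p(x) = (kx - 1)(kx - 2)⋯(kx - n + 1) / (n - 1)!` of degree `n - 1`, whose
`n`-th forward difference vanishes; hence `∑_{ℓ=1}^n (-1)^(ℓ-1) C(n, ℓ) p(ℓ) = p(0) = (-1)^(n-1)`.
-/

open Finset Polynomial Nat

theorem sum_range_alternating_choose_mul_eval_eq_zero {R : Type*} [CommRing R] {P : R[X]}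
    {n : ℕ} (hP : P.natDegree < n) :
    ∑ ℓ ∈ range (n + 1), (-1 : R) ^ ℓ * n.choose ℓ * P.eval (ℓ : R) = 0 := by
  have hdiff := congr_fun (fwdDiff_iter_eq_zero_of_degree_lt hP) 0
  rw [fwdDiff_iter_eq_sum_shift] at hdiff
  have hsign : ∀ ℓ ≤ n, (-1 : R) ^ ℓ = (-1) ^ n * (-1) ^ (n - ℓ) := fun ℓ hℓ => by
    rw [← pow_add, show n + (n - ℓ) = ℓ + 2 * (n - ℓ) by omega, pow_add, pow_mul]
    simp
  calc ∑ ℓ ∈ range (n + 1), (-1 : R) ^ ℓ * n.choose ℓ * P.eval (ℓ : R)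
      = (-1) ^ n * ∑ ℓ ∈ range (n + 1),
          ((-1 : ℤ) ^ (n - ℓ) * n.choose ℓ) • P.eval (0 + ℓ • 1) := by
        rw [mul_sum]
        refine sum_congr rfl fun ℓ hℓ => ?_
        rw [hsign ℓ (Nat.le_of_lt_succ (mem_range.mp hℓ))]
        simp [zsmul_eq_mul, mul_assoc]
    _ = 0 := by rw [hdiff, Pi.zero_apply, mul_zero]

theorem sum_Icc_alternating_choose_mul_eval {R : Type*} [CommRing R] {P : R[X]} {n : ℕ}
    (hP : P.natDegree < n) :
    ∑ ℓ ∈ Icc 1 n, (-1 : R) ^ (ℓ - 1) * n.choose ℓ * P.eval (ℓ : R) = P.eval 0 := by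
  have h := sum_range_alternating_choose_mul_eval_eq_zero hP
  rw [sum_range_succ'] at h
  simp only [pow_succ, pow_zero, mul_neg_one, neg_mul, sum_neg_distrib, choose_zero_right,
    cast_zero, cast_one, mul_one, one_mul, cast_add] at h
  rw [← Ico_add_one_right_eq_Icc, sum_Ico_eq_sum_range, Nat.add_sub_cancel]
  simp only [add_comm 1, Nat.add_sub_cancel, cast_add, cast_one]
  linear_combination -h

theorem descPochhammer_eval_neg_one {R : Type*} [CommRing R] (m : ℕ) :
    (descPochhammer R m).eval (-1) = (-1) ^ m * m ! := by
  have h : ∀ j ∈ range m, (-1 - j : R) = -1 * ((j + 1 : ℕ) : R) := fun j _ => by push_cast; ring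
  rw [descPochhammer_eval_eq_prod_range, prod_congr rfl h, prod_mul_distrib, prod_const,
    card_range, ← Nat.cast_prod, prod_range_add_one_eq_factorial]

theorem sum_Icc_alternating_choose_mul_choose_mul_sub_one {K : Type*} [Field K] [CharZero K]
    {k m n : ℕ} (hk : 1 ≤ k) (hmn : m < n) :
    ∑ ℓ ∈ Icc 1 n, (-1 : K) ^ (ℓ - 1) * n.choose ℓ * (k * ℓ - 1).choose m = (-1) ^ m := by
  set P : K[X] := (m ! : K)⁻¹ • (descPochhammer K m).comp (C (k : K) * X - 1)
  have hdeg : P.natDegree < n := by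
    refine lt_of_le_of_lt ?_ hmn
    calc P.natDegree ≤ ((descPochhammer K m).comp (C (k : K) * X - 1)).natDegree :=
          natDegree_smul_le _ _
      _ ≤ m * 1 := by
        refine natDegree_comp_le.trans (Nat.mul_le_mul (descPochhammer_natDegree K m).le ?_)
        compute_degree!
      _ = m := mul_one m
  have heval : ∀ ℓ ∈ Icc 1 n, P.eval (ℓ : K) = (k * ℓ - 1).choose m := by
    intro ℓ hℓ
    have hkℓ : 1 ≤ k * ℓ := Nat.mul_le_mul hk (mem_Icc.mp hℓ).1
    rw [Nat.cast_choose_eq_descPochhammer_div, Nat.cast_sub hkℓ]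
    simp [P, div_eq_inv_mul]
  rw [← sum_congr rfl fun ℓ hℓ => by rw [← heval ℓ hℓ], sum_Icc_alternating_choose_mul_eval hdeg]
  simp only [P, eval_smul, eval_comp, eval_sub, eval_mul, eval_C, eval_X, eval_one, mul_zero,
    zero_sub, descPochhammer_eval_neg_one, smul_eq_mul]
  rw [mul_left_comm, inv_mul_cancel₀ (by exact_mod_cast m.factorial_ne_zero), mul_one]

theorem Nat.choose_mul_eq_mul_sub_one_choose_sub_one {m n : ℕ} (hn : n ≠ 0) :
    m.choose n * n = m * (m - 1).choose (n - 1) := by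
  obtain ⟨b, rfl⟩ := exists_eq_succ_of_ne_zero hn
  cases m with
  | zero => simp
  | succ a => simpa using (add_one_mul_choose_eq a b).symm

theorem Nat.mul_succ_mul_choose_succ_mul_choose_sub {k ℓ n : ℕ} (hℓn : ℓ ≤ n) (hn : n ≠ 0) :
    n * ((ℓ + 1) * (k * ℓ).choose (ℓ + 1) * ((k - 1) * ℓ).choose (n - ℓ))
      = k * (k - 1) * ℓ ^ 2 * (n.choose ℓ * (k * ℓ - 1).choose (n - 1)) := by
  rw [Nat.sub_one_mul]
  calc n * ((ℓ + 1) * (k * ℓ).choose (ℓ + 1) * (k * ℓ - ℓ).choose (n - ℓ))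
      = n * ((k * ℓ).choose ℓ * (k * ℓ - ℓ).choose (n - ℓ)) * (k * ℓ - ℓ) := by
        rw [mul_comm (ℓ + 1), choose_succ_right_eq]; ring
    _ = (k * ℓ).choose n * n * n.choose ℓ * (k * ℓ - ℓ) := by
        rw [← choose_mul hℓn]; ring
    _ = k * (k - 1) * ℓ ^ 2 * (n.choose ℓ * (k * ℓ - 1).choose (n - 1)) := by
        rw [Nat.choose_mul_eq_mul_sub_one_choose_sub_one hn, ← Nat.sub_one_mul]; ring

/-- For positive integers `k` and `n`,
`∑_{ℓ=1}^{n} ((−1)^{ℓ−1}(ℓ+1)/ℓ²) C(kℓ, ℓ+1) C((k−1)ℓ, n−ℓ) = (−1)^{n−1} k(k−1)/n`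
in `ℚ`; equivalently, `F(k,1, y(1+y)^{k−1}) = k(k−1) log(1+y)` as formal power
series in `y`. -/
theorem F_substitution_identity (k n : ℕ) (hk : 0 < k) (hn : 0 < n) :
    ∑ ℓ ∈ Finset.Icc 1 n,
        ((-1 : ℚ) ^ (ℓ - 1) * (ℓ + 1) / (ℓ : ℚ) ^ 2
          * (Nat.choose (k * ℓ) (ℓ + 1) : ℚ)
          * (Nat.choose ((k - 1) * ℓ) (n - ℓ) : ℚ))
      = (-1 : ℚ) ^ (n - 1) * k * ((k : ℚ) - 1) / n := by
  have hterm : ∀ ℓ ∈ Icc 1 n,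
      (-1 : ℚ) ^ (ℓ - 1) * (ℓ + 1) / (ℓ : ℚ) ^ 2 * ((k * ℓ).choose (ℓ + 1) : ℚ)
          * (((k - 1) * ℓ).choose (n - ℓ) : ℚ)
        = k * (k - 1) / n * ((-1) ^ (ℓ - 1) * n.choose ℓ * (k * ℓ - 1).choose (n - 1)) := by
    intro ℓ hℓ
    obtain ⟨hℓ1, hℓn⟩ := mem_Icc.mp hℓ
    have h := congrArg (Nat.cast : ℕ → ℚ)
      (Nat.mul_succ_mul_choose_succ_mul_choose_sub (k := k) hℓn hn.ne')
    push_cast [Nat.cast_sub hk] at h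
    have hℓ0 : (ℓ : ℚ) ≠ 0 := by exact_mod_cast (by omega : ℓ ≠ 0)
    field_simp
    linear_combination h
  rw [sum_congr rfl hterm, ← mul_sum,
    sum_Icc_alternating_choose_mul_choose_mul_sub_one hk (Nat.sub_lt hn one_pos)]
  ring
end

section
/- Let k and M be positive integers and let β be a complex number. Then the coefficient of x^M in the formal power series exp(β F(k,1,x)) over ℂ equals (β/M) · k(k−1) · C(k(k−1)β − (k−1)M − 1, M−1), where C(z, m) denotes the generalized binomial coefficient. -/
/-!
Put `G = β F(k,1,x)` and `r = -k(k-1)β`. Both `exp G` and `B(x) = 𝓑ₖ(-x)^r`, where the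
generalized binomial series solves `𝓑ₖ = 1 + x 𝓑ₖ^k`, satisfy `Y' = Y G'` and `Y(0) = 1`, so they
coincide, and the coefficient of `B` is the claimed one after the reflection
`C(z, m) = (-1)^m C(m - 1 - z, m)`. Coefficientwise, `B' = B G'` reduces to the convolution identity
`∑_{p+q=M} C(kq, q) · r/(kp+r) C(kp+r, p) = C(kM+r, M)`: for natural `r` both sides satisfy Pascal's
rule in `r`, and the identity extends to all `r ∈ ℂ` because both sides are polynomials in `r`.
-/

open PowerSeries

/-- The formal power series `F(k,r,x) = (k−r) ∑_{ℓ≥1} ((−1)^{ℓ−1}/ℓ) C(kℓ, rℓ) x^ℓ`. -/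
noncomputable def Fser (K : Type*) [Field K] (k r : ℕ) : PowerSeries K :=
  PowerSeries.mk fun ℓ => if ℓ = 0 then 0 else
    ((k : K) - (r : K)) * ((-1 : K) ^ (ℓ - 1) / (ℓ : K)) * (Nat.choose (k * ℓ) (r * ℓ) : K)

/-- The exponential `exp(G) = ∑_{n≥0} G^n / n!` of a power series `G` with zero constant
term: since `G^n` has no terms of degree `< n`, the coefficient of `x^M` is the finite
sum `∑_{n=0}^{M} (coeff M (G^n)) / n!`. -/
noncomputable def expPS {K : Type*} [Field K] (G : PowerSeries K) : PowerSeries K :=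
  PowerSeries.mk fun M => ∑ n ∈ Finset.range (M + 1),
    PowerSeries.coeff (R := K) M (G ^ n) / (n.factorial : K)

/-- The generalized binomial coefficient `C(z, m) = (∏_{j=0}^{m−1} (z − j)) / m!`. -/
noncomputable def gchoose (z : ℂ) (m : ℕ) : ℂ :=
  (∏ j ∈ Finset.range m, (z - (j : ℂ))) / (m.factorial : ℂ)

open Finset

@[simp]
lemma gchoose_zero (z : ℂ) : gchoose z 0 = 1 := by
  simp [gchoose]

lemma gchoose_eq_descPochhammer_eval (z : ℂ) (m : ℕ) :
    gchoose z m = (descPochhammer ℂ m).eval z / m.factorial := by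
  rw [gchoose, descPochhammer_eval_eq_prod_range]

lemma gchoose_natCast (n m : ℕ) : gchoose n m = n.choose m := by
  rw [gchoose_eq_descPochhammer_eval, Nat.cast_choose_eq_descPochhammer_div]

lemma succ_mul_gchoose_succ (z : ℂ) (m : ℕ) :
    (m + 1) * gchoose z (m + 1) = (z - m) * gchoose z m := by
  simp only [gchoose, prod_range_succ, Nat.factorial_succ, Nat.cast_mul, Nat.cast_succ]
  field_simp

lemma succ_mul_gchoose_add_one_succ (z : ℂ) (m : ℕ) :
    (m + 1) * gchoose (z + 1) (m + 1) = (z + 1) * gchoose z m := by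
  have hprod : ∏ j ∈ range m, (z + 1 - ((j : ℂ) + 1)) = ∏ j ∈ range m, (z - j) :=
    prod_congr rfl fun j _ => by ring
  simp only [gchoose, prod_range_succ', Nat.factorial_succ, Nat.cast_mul, Nat.cast_succ, hprod,
    Nat.cast_zero, sub_zero]
  field_simp

lemma gchoose_eq_neg_one_pow_mul (z : ℂ) (m : ℕ) :
    gchoose z m = (-1) ^ m * gchoose (m - 1 - z) m := by
  rw [gchoose, gchoose, mul_div_assoc', ← prod_range_reflect (fun j : ℕ => (m : ℂ) - 1 - z - j),
    show (-1 : ℂ) ^ m = ∏ _j ∈ range m, (-1 : ℂ) by simp, ← prod_mul_distrib]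
  congr 1
  refine prod_congr rfl fun j hj => ?_
  rw [mem_range] at hj
  rw [Nat.cast_sub (by omega), Nat.cast_sub (by omega)]
  push_cast
  ring

lemma exists_eval_eq_gchoose_add (a : ℂ) (m : ℕ) :
    ∃ p : Polynomial ℂ, ∀ r, p.eval r = gchoose (a + r) m :=
  ⟨.C (m.factorial : ℂ)⁻¹ * (descPochhammer ℂ m).comp (.C a + .X), fun r => by
    simp [gchoose_eq_descPochhammer_eval, div_eq_inv_mul]⟩

/-- `r / (kj + r) · C(kj + r, j)`, the coefficient of `x ^ j` in `𝓑ₖ(x) ^ r`, written in a form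
that is polynomial in `r`. -/
noncomputable def genBinomCoeff (k : ℕ) (r : ℂ) : ℕ → ℂ
  | 0 => 1
  | j + 1 => r / (j + 1) * gchoose (k * (j + 1) + r - 1) j

lemma genBinomCoeff_add_one_succ (k : ℕ) (r : ℂ) (j : ℕ) :
    genBinomCoeff k (r + 1) (j + 1) = genBinomCoeff k r (j + 1) + genBinomCoeff k (r + k) j := by
  cases j with
  | zero => simp [genBinomCoeff]
  | succ j =>
    set w : ℂ := k * (j + 2) + r - 1
    have h₁ := succ_mul_gchoose_add_one_succ w j
    have h₂ := succ_mul_gchoose_succ w j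
    simp only [genBinomCoeff, Nat.cast_succ]
    rw [show (k : ℂ) * (j + 1 + 1) + (r + 1) - 1 = w + 1 by ring,
      show (k : ℂ) * (j + 1 + 1) + r - 1 = w by ring,
      show (k : ℂ) * (j + 1) + (r + k) - 1 = w by ring]
    have hj : (j : ℂ) + 1 ≠ 0 := Nat.cast_add_one_ne_zero j
    have hj' : (j : ℂ) + 1 + 1 ≠ 0 := by exact_mod_cast Nat.succ_ne_zero (j + 1)
    field_simp
    linear_combination (r + 1) * h₁ - r * h₂

lemma gchoose_sub_genBinomCoeff (k : ℕ) (r : ℂ) (m : ℕ) :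
    gchoose (k * (m + 1) + r) (m + 1) - genBinomCoeff k r (m + 1)
      = k * gchoose (k * (m + 1) + r - 1) m := by
  have h := succ_mul_gchoose_add_one_succ (k * (m + 1) + r - 1) m
  rw [sub_add_cancel] at h
  simp only [genBinomCoeff]
  field_simp
  linear_combination h

lemma exists_eval_eq_genBinomCoeff (k j : ℕ) :
    ∃ p : Polynomial ℂ, ∀ r, p.eval r = genBinomCoeff k r j := by
  cases j with
  | zero => exact ⟨1, fun r => by simp [genBinomCoeff]⟩
  | succ j =>
    obtain ⟨p, hp⟩ := exists_eval_eq_gchoose_add (k * (j + 1) - 1) j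
    refine ⟨.C ((j : ℂ) + 1)⁻¹ * .X * p, fun r => ?_⟩
    simp only [genBinomCoeff, Polynomial.eval_mul, Polynomial.eval_C, Polynomial.eval_X, hp,
      sub_add_eq_add_sub]
    ring

lemma sum_choose_mul_genBinomCoeff_add_one (k : ℕ) (r : ℂ) (M : ℕ) :
    ∑ p ∈ antidiagonal (M + 1), ((k * p.2).choose p.2 : ℂ) * genBinomCoeff k (r + 1) p.1
      = ∑ p ∈ antidiagonal (M + 1), ((k * p.2).choose p.2 : ℂ) * genBinomCoeff k r p.1
        + ∑ p ∈ antidiagonal M, ((k * p.2).choose p.2 : ℂ) * genBinomCoeff k (r + k) p.1 := by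
  simp only [Nat.sum_antidiagonal_succ, genBinomCoeff_add_one_succ, mul_add, sum_add_distrib]
  simp only [genBinomCoeff]
  ring

lemma sum_choose_mul_genBinomCoeff_natCast (k M n : ℕ) :
    ∑ p ∈ antidiagonal M, ((k * p.2).choose p.2 : ℂ) * genBinomCoeff k n p.1
      = (k * M + n).choose M := by
  induction M generalizing n with
  | zero => simp [genBinomCoeff]
  | succ M ihM =>
    induction n with
    | zero => simp [Nat.sum_antidiagonal_succ, genBinomCoeff]
    | succ n ihn =>
      rw [Nat.cast_succ, sum_choose_mul_genBinomCoeff_add_one, ihn, ← Nat.cast_add, ihM,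
        show k * M + (n + k) = k * (M + 1) + n by ring, ← Nat.cast_add,
        ← add_assoc, Nat.choose_succ_succ', add_comm]

lemma sum_choose_mul_genBinomCoeff (k : ℕ) (r : ℂ) (M : ℕ) :
    ∑ p ∈ antidiagonal M, ((k * p.2).choose p.2 : ℂ) * genBinomCoeff k r p.1
      = gchoose (k * M + r) M := by
  choose P hP using exists_eval_eq_genBinomCoeff k
  obtain ⟨Q, hQ⟩ := exists_eval_eq_gchoose_add (k * M) M
  suffices h : ∑ p ∈ antidiagonal M, .C ((k * p.2).choose p.2 : ℂ) * P p.1 = Q by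
    simpa [Polynomial.eval_finsetSum, hP, hQ] using congr_arg (Polynomial.eval r) h
  refine Polynomial.eq_of_infinite_eval_eq _ _ <|
    Set.infinite_of_injective_forall_mem Nat.cast_injective fun n : ℕ => ?_
  simp only [Set.mem_ofPred_eq, Polynomial.eval_finsetSum, Polynomial.eval_mul, Polynomial.eval_C,
    hP, hQ, sum_choose_mul_genBinomCoeff_natCast]
  exact_mod_cast (gchoose_natCast (k * M + n) M).symm

lemma sum_choose_succ_mul_genBinomCoeff (k : ℕ) (r : ℂ) (m : ℕ) :
    ∑ p ∈ antidiagonal m, ((k * (p.2 + 1)).choose (p.2 + 1) : ℂ) * genBinomCoeff k r p.1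
      = k * gchoose (k * (m + 1) + r - 1) m := by
  have h := sum_choose_mul_genBinomCoeff k r (m + 1)
  rw [Nat.sum_antidiagonal_succ', mul_zero, Nat.choose_zero_right, Nat.cast_one, one_mul,
    Nat.cast_succ] at h
  rw [← gchoose_sub_genBinomCoeff, ← h, add_sub_cancel_left]

section PowerSeriesExp

lemma coeff_pow_of_lt {R : Type*} [CommSemiring R] {G : R⟦X⟧} (hG : constantCoeff G = 0)
    {m n : ℕ} (h : m < n) : coeff m (G ^ n) = 0 := by
  obtain ⟨H, rfl⟩ := X_dvd_iff.mpr hG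
  rw [mul_pow, coeff_X_pow_mul', if_neg (by omega)]

variable {K : Type*} [Field K]

noncomputable def expPartial (G : K⟦X⟧) (N : ℕ) : K⟦X⟧ :=
  ∑ n ∈ range (N + 1), (n.factorial : K)⁻¹ • G ^ n

lemma coeff_expPS_eq_coeff_expPartial {G : K⟦X⟧} (hG : constantCoeff G = 0) {m N : ℕ}
    (h : m ≤ N) : coeff m (expPS G) = coeff m (expPartial G N) := by
  rw [expPS, coeff_mk, expPartial, map_sum]
  refine sum_subset (range_subset_range.mpr (by omega)) (fun n _ hn => ?_) |>.trans
    (sum_congr rfl fun n _ => ?_)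
  · rw [mem_range, not_lt] at hn
    rw [coeff_pow_of_lt hG (by omega), zero_div]
  · rw [coeff_smul, smul_eq_mul, div_eq_inv_mul]

variable [CharZero K]

lemma derivative_expPartial_succ (G : K⟦X⟧) (N : ℕ) :
    d⁄dX K (expPartial G (N + 1)) = expPartial G N * d⁄dX K G := by
  rw [expPartial, expPartial, map_sum, sum_range_succ', sum_mul]
  simp only [pow_zero, Derivation.map_smul, Derivation.map_one_eq_zero, smul_zero, add_zero]
  refine sum_congr rfl fun n _ => ?_
  rw [derivative_pow, Nat.add_sub_cancel, ← nsmul_eq_mul, ← Nat.cast_smul_eq_nsmul K,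
    smul_mul_assoc, smul_mul_assoc, smul_smul]
  congr 1
  rw [Nat.factorial_succ, Nat.cast_mul, mul_inv, mul_comm, ← mul_assoc,
    mul_inv_cancel₀ (Nat.cast_ne_zero.mpr n.succ_ne_zero), one_mul]

lemma derivative_expPS {G : K⟦X⟧} (hG : constantCoeff G = 0) :
    d⁄dX K (expPS G) = expPS G * d⁄dX K G := by
  ext m
  rw [coeff_derivative, coeff_expPS_eq_coeff_expPartial hG le_rfl, ← coeff_derivative,
    derivative_expPartial_succ, coeff_mul, coeff_mul]
  exact sum_congr rfl fun p hp => by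
    rw [coeff_expPS_eq_coeff_expPartial hG (HasAntidiagonal.antidiagonal.fst_le hp)]

lemma eq_of_derivative_eq_mul {A B H : K⟦X⟧} (hA : d⁄dX K A = A * H) (hB : d⁄dX K B = B * H)
    (h₀ : constantCoeff A = constantCoeff B) : A = B := by
  ext n
  induction n using Nat.strong_induction_on with
  | _ n ih =>
    cases n with
    | zero => simpa using h₀
    | succ m =>
      have hA' := congr_arg (coeff m) hA
      have hB' := congr_arg (coeff m) hB
      rw [coeff_derivative, coeff_mul] at hA' hB'
      have hsum : ∑ p ∈ antidiagonal m, coeff p.1 A * coeff p.2 H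
          = ∑ p ∈ antidiagonal m, coeff p.1 B * coeff p.2 H :=
        sum_congr rfl fun p hp => by rw [ih p.1 (Nat.antidiagonal.fst_lt hp)]
      exact mul_right_cancel₀ (Nat.cast_add_one_ne_zero m) (by rw [hA', hB', hsum])

lemma coeff_derivative_Fser (k r q : ℕ) :
    coeff q (d⁄dX K (Fser K k r))
      = ((k : K) - r) * (-1) ^ q * ((k * (q + 1)).choose (r * (q + 1)) : K) := by
  rw [coeff_derivative, Fser, coeff_mk, if_neg q.succ_ne_zero, Nat.add_sub_cancel]
  have hq : (q : K) + 1 ≠ 0 := Nat.cast_add_one_ne_zero q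
  push_cast
  field_simp

end PowerSeriesExp

/-- `𝓑ₖ(-x) ^ r`. -/
noncomputable def genBinomSeriesNeg (k : ℕ) (r : ℂ) : ℂ⟦X⟧ :=
  mk fun j => (-1) ^ j * genBinomCoeff k r j

lemma derivative_genBinomSeriesNeg (k : ℕ) (β : ℂ) :
    d⁄dX ℂ (genBinomSeriesNeg k (-(k * (k - 1) * β)))
      = genBinomSeriesNeg k (-(k * (k - 1) * β)) * d⁄dX ℂ (C β * Fser ℂ k 1) := by
  ext m
  have hterm : ∀ p ∈ antidiagonal m,
      coeff p.1 (genBinomSeriesNeg k (-(k * (k - 1) * β))) * coeff p.2 (d⁄dX ℂ (C β * Fser ℂ k 1))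
      = β * (k - 1) * (-1) ^ m * (((k * (p.2 + 1)).choose (p.2 + 1) : ℂ)
        * genBinomCoeff k (-(k * (k - 1) * β)) p.1) := fun p hp => by
    rw [← mem_antidiagonal.mp hp, ← smul_eq_C_mul, Derivation.map_smul, coeff_smul,
      genBinomSeriesNeg, coeff_mk,
      coeff_derivative_Fser, smul_eq_mul, one_mul]
    push_cast
    ring
  rw [coeff_mul, sum_congr rfl hterm, ← mul_sum, sum_choose_succ_mul_genBinomCoeff,
    coeff_derivative, genBinomSeriesNeg, coeff_mk, genBinomCoeff]
  have hm : (m : ℂ) + 1 ≠ 0 := Nat.cast_add_one_ne_zero m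
  field_simp
  ring

theorem coeff_exp_beta_F_general (k M : ℕ) (hM : 0 < M) (β : ℂ) :
    PowerSeries.coeff (R := ℂ) M (expPS (PowerSeries.C (R := ℂ) β * Fser ℂ k 1))
      = β / (M : ℂ) * ((k : ℂ) * ((k : ℂ) - 1))
        * gchoose ((k : ℂ) * ((k : ℂ) - 1) * β - ((k : ℂ) - 1) * (M : ℂ) - 1) (M - 1) := by
  have hG : constantCoeff (C β * Fser ℂ k 1) = 0 := by
    rw [← coeff_zero_eq_constantCoeff_apply, coeff_C_mul, Fser, coeff_mk, if_pos rfl, mul_zero]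
  have hexp : expPS (C β * Fser ℂ k 1) = genBinomSeriesNeg k (-(k * (k - 1) * β)) :=
    eq_of_derivative_eq_mul (derivative_expPS hG) (derivative_genBinomSeriesNeg k β)
      (by rw [← coeff_zero_eq_constantCoeff_apply, ← coeff_zero_eq_constantCoeff_apply]
          simp [expPS, genBinomSeriesNeg, genBinomCoeff])
  obtain ⟨m, rfl⟩ := Nat.exists_eq_add_one_of_ne_zero hM.ne'
  rw [hexp, genBinomSeriesNeg, coeff_mk, genBinomCoeff, gchoose_eq_neg_one_pow_mul, Nat.add_sub_cancel]
  push_cast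
  rw [show (m : ℂ) - 1 - (k * (m + 1) + -(k * (k - 1) * β) - 1)
    = k * (k - 1) * β - (k - 1) * (m + 1) - 1 by ring]
  have hsign : (-1 : ℂ) ^ (m + 1) * (-1) ^ m = -1 := by
    rw [← pow_add, show m + 1 + m = 2 * m + 1 by ring, pow_succ, pow_mul, neg_one_sq, one_pow,
      one_mul]
  linear_combination (-(k * (k - 1) * β) / (m + 1)
    * gchoose (k * (k - 1) * β - (k - 1) * (m + 1) - 1) m) * hsign

/-- For positive integers `k, M` and `β ∈ ℂ`, the coefficient of `x^M` in
`exp(β F(k,1,x))` equals `(β/M)·k(k−1)·C(k(k−1)β − (k−1)M − 1, M−1)`. -/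
theorem coeff_exp_beta_F (k M : ℕ) (hk : 0 < k) (hM : 0 < M) (β : ℂ) :
    PowerSeries.coeff (R := ℂ) M (expPS (PowerSeries.C (R := ℂ) β * Fser ℂ k 1))
      = β / (M : ℂ) * ((k : ℂ) * ((k : ℂ) - 1))
        * gchoose ((k : ℂ) * ((k : ℂ) - 1) * β - ((k : ℂ) - 1) * (M : ℂ) - 1) (M - 1) :=
  coeff_exp_beta_F_general k M hM β
end

section
/- Let k and M be positive integers and let β be a complex number. Then Σ_{ℓ=1}^{M} (−1)^{M−ℓ} · ℓ · C(k(k−1)β, ℓ) · C(kM − ℓ − 1, M − ℓ) = β k(k−1) · C(k(k−1)β − (k−1)M − 1, M − 1), where C(z, m) for complex z denotes the generalized binomial coefficient and C(kM − ℓ − 1, M − ℓ) is the ordinary binomial coefficient. -/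
open Finset Polynomial

theorem gchoose_eq_ringChoose (z : ℂ) (m : ℕ) : gchoose z m = Ring.choose z m := by
  rw [gchoose, Ring.choose_eq_smul, ← descPochhammer_eval_eq_prod_range, ← aeval_eq_smeval,
    ← descPochhammer_map (algebraMap ℤ ℂ), aeval_def, ← eval_map, smul_eq_mul, inv_mul_eq_div]

theorem Finset.Nat.sum_Icc_one_eq_sum_antidiagonal {M : Type*} [AddCommMonoid M]
    (f : ℕ → ℕ → M) (n : ℕ) :
    ∑ ℓ ∈ Icc 1 (n + 1), f (ℓ - 1) (n + 1 - ℓ) = ∑ p ∈ antidiagonal n, f p.1 p.2 := by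
  rw [Nat.sum_antidiagonal_eq_sum_range_succ f n, ← Ico_add_one_right_eq_Icc,
    sum_Ico_eq_sum_range]
  refine sum_congr rfl fun i _ ↦ ?_
  congr 1 <;> omega

namespace Ring

variable {R : Type*} [CommRing R] [BinomialRing R]

theorem multichoose_natCast (N n : ℕ) : multichoose (N : R) n = Nat.multichoose N n := by
  have h : multichoose (N : ℤ) n = (Nat.multichoose N n : ℤ) := by
    rw [Nat.multichoose_eq]; rfl
  rw [← map_natCast (Int.castRingHom R), ← map_multichoose, h, map_natCast]

theorem neg_one_pow_mul_multichoose_natCast (N n : ℕ) :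
    (-1) ^ n * (Nat.multichoose N n : R) = choose (-(N : R)) n := by
  rw [choose_neg', multichoose_natCast, Units.smul_def, zsmul_eq_mul,
    Int.cast_negOnePow_natCast]

theorem succ_mul_choose_succ (r : R) (n : ℕ) :
    (n + 1 : R) * choose r (n + 1) = r * choose (r - 1) n := by
  simpa [nsmul_eq_mul] using choose_smul_choose r (Nat.le_add_left 1 n)

end Ring

/-- For positive integers `k, M` and `β ∈ ℂ`,
`∑_{ℓ=1}^{M} (−1)^{M−ℓ} ℓ C(k(k−1)β, ℓ) C(kM−ℓ−1, M−ℓ)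
  = β k(k−1) C(k(k−1)β − (k−1)M − 1, M−1)`,
where the first `C` is the generalized binomial coefficient and
`C(kM−ℓ−1, M−ℓ)` is the ordinary binomial coefficient. -/
theorem lagrange_expansion_identity (k M : ℕ) (hk : 0 < k) (hM : 0 < M) (β : ℂ) :
    ∑ ℓ ∈ Finset.Icc 1 M,
        (-1 : ℂ) ^ (M - ℓ) * (ℓ : ℂ)
          * gchoose ((k : ℂ) * ((k : ℂ) - 1) * β) ℓ
          * (Nat.choose (k * M - ℓ - 1) (M - ℓ) : ℂ)
      = β * (k : ℂ) * ((k : ℂ) - 1)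
        * gchoose ((k : ℂ) * ((k : ℂ) - 1) * β - ((k : ℂ) - 1) * (M : ℂ) - 1) (M - 1) := by
  obtain ⟨j, rfl⟩ : ∃ j, k = j + 1 := ⟨k - 1, by omega⟩
  obtain ⟨n, rfl⟩ : ∃ n, M = n + 1 := ⟨M - 1, by omega⟩
  set a : ℂ := ((j + 1 : ℕ) : ℂ) * (((j + 1 : ℕ) : ℂ) - 1) * β
  have hterm : ∀ ℓ ∈ Icc 1 (n + 1),
      (-1 : ℂ) ^ (n + 1 - ℓ) * (ℓ : ℂ) * gchoose a ℓ
          * (Nat.choose ((j + 1) * (n + 1) - ℓ - 1) (n + 1 - ℓ) : ℂ)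
        = a * (Ring.choose (a - 1) (ℓ - 1) * Ring.choose (-(j * (n + 1) : ℕ) : ℂ) (n + 1 - ℓ)) := by
    intro ℓ hℓ
    obtain ⟨hℓ1, hℓM⟩ := mem_Icc.mp hℓ
    obtain ⟨i, rfl⟩ : ∃ i, ℓ = i + 1 := ⟨ℓ - 1, by omega⟩
    have hchoose : (j + 1) * (n + 1) - (i + 1) - 1 = j * (n + 1) + (n + 1 - (i + 1)) - 1 := by
      rw [add_one_mul j]; omega
    rw [hchoose, ← Nat.multichoose_eq, ← Ring.neg_one_pow_mul_multichoose_natCast,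
      gchoose_eq_ringChoose, ← mul_assoc, ← Ring.succ_mul_choose_succ, Nat.add_sub_cancel]
    push_cast
    ring
  rw [sum_congr rfl hterm, ← mul_sum, Finset.Nat.sum_Icc_one_eq_sum_antidiagonal
    (fun p q ↦ Ring.choose (a - 1) p * Ring.choose (-(j * (n + 1) : ℕ) : ℂ) q),
    ← Ring.add_choose_eq n (Commute.all _ _), gchoose_eq_ringChoose, Nat.add_sub_cancel]
  simp only [a]
  push_cast
  ring_nf
end

section
/- For all integers k ≥ 1 and r ≥ 0, the identity (1/(2r+1)²) [x²]{exp((2r+1) F(k,r,x))} = −(1/4) C(2k, 2r+1) + (1/2) ((r+1) C(k, r+1))² holds in ℚ, where C(a,b) is the ordinary binomial coefficient. (This is the explicit formula for the index Ω(2, 2r+1, k) of the Kronecker quiver with dimension vector (2, 2r+1) and k arrows.) -/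
open PowerSeries

theorem Nat.cast_choose_succ_right_mul {R : Type*} [CommRing R] (n m : ℕ) :
    (n.choose (m + 1) : R) * (m + 1) = n.choose m * (n - m) := by
  rcases le_or_gt m n with hmn | hnm
  · exact_mod_cast congrArg (Nat.cast : ℕ → R) (Nat.choose_succ_right_eq n m)
  · simp [Nat.choose_eq_zero_of_lt hnm, Nat.choose_eq_zero_of_lt (hnm.trans (Nat.lt_succ_self m))]

section

variable {K : Type*} [Field K]

theorem coeff_two_expPS {G : K⟦X⟧} (hG : constantCoeff G = 0) :
    coeff 2 (expPS G) = coeff 2 G + coeff 1 G ^ 2 / 2 := by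
  have coeff_two_sq : coeff 2 (G ^ 2) = coeff 1 G ^ 2 := by
    rw [pow_two, coeff_mul, Finset.Nat.sum_antidiagonal_eq_sum_range_succ_mk]
    simp [Finset.sum_range_succ, hG, pow_two]
  simp [expPS, Finset.sum_range_succ, coeff_two_sq]

theorem constantCoeff_Fser (k r : ℕ) : constantCoeff (Fser K k r) = 0 := by
  simp [Fser, ← coeff_zero_eq_constantCoeff_apply]

theorem coeff_one_Fser (k r : ℕ) : coeff 1 (Fser K k r) = (k - r) * k.choose r := by
  simp [Fser]

theorem coeff_two_Fser (k r : ℕ) :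
    coeff 2 (Fser K k r) = -((k - r) * (2 * k).choose (2 * r)) / 2 := by
  simp only [Fser, coeff_mk, OfNat.ofNat_ne_zero, ↓reduceIte, Nat.add_one_sub_one, pow_one,
    Nat.cast_ofNat, mul_comm _ 2]
  ring

end

theorem index_two_formula_general (k r : ℕ) :
    (1 / (2 * (r : ℚ) + 1) ^ 2)
        * PowerSeries.coeff (R := ℚ) 2 (expPS (PowerSeries.C (R := ℚ) (2 * (r : ℚ) + 1) * Fser ℚ k r))
      = -(1 / 4) * (Nat.choose (2 * k) (2 * r + 1) : ℚ)
        + (1 / 2) * (((r : ℚ) + 1) * (Nat.choose k (r + 1) : ℚ)) ^ 2 := by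
  have hG : constantCoeff (C (2 * (r : ℚ) + 1) * Fser ℚ k r) = 0 := by
    simp [constantCoeff_Fser]
  rw [coeff_two_expPS hG, coeff_C_mul, coeff_C_mul, coeff_one_Fser, coeff_two_Fser]
  have hchoose := Nat.cast_choose_succ_right_mul (R := ℚ) k r
  have hchoose_double := Nat.cast_choose_succ_right_mul (R := ℚ) (2 * k) (2 * r)
  push_cast at hchoose_double
  field_simp
  linear_combination 2 * hchoose_double
    - 4 * (2 * (r : ℚ) + 1) * ((k - r) * k.choose r + (r + 1) * k.choose (r + 1)) * hchoose

/-- The explicit formula for the index `Ω(2, 2r+1, k)`: for `k ≥ 1` and `r ≥ 0`,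
`(1/(2r+1)²)[x²]{exp((2r+1)F(k,r,x))} = −(1/4) C(2k, 2r+1) + (1/2)((r+1) C(k, r+1))²`. -/
theorem index_two_formula (k r : ℕ) (hk : 1 ≤ k) :
    (1 / (2 * (r : ℚ) + 1) ^ 2)
        * PowerSeries.coeff (R := ℚ) 2 (expPS (PowerSeries.C (R := ℚ) (2 * (r : ℚ) + 1) * Fser ℚ k r))
      = -(1 / 4) * (Nat.choose (2 * k) (2 * r + 1) : ℚ)
        + (1 / 2) * (((r : ℚ) + 1) * (Nat.choose k (r + 1) : ℚ)) ^ 2 :=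
  index_two_formula_general k r
end

section
/- Let k be a positive integer, let z be a complex number with sin z ≠ 0, and let ξ_1, …, ξ_k be complex numbers such that sin(ξ_m − ξ_i) ≠ 0 for all m ≠ i. Then Σ_{m=1}^{k} Π_{i=1, i≠m}^{k} sin(ξ_m − ξ_i + z) / sin(ξ_m − ξ_i) = sin(kz) / sin(z). -/
/-!
Put `y = exp (z I)` and `u m = exp (ξ m I) ^ 2`. Each factor
`sin (ξ m - ξ i + z) / sin (ξ m - ξ i)` equals `y⁻¹ (y² u m - u i) / (u m - u i)` and
`sin (k z) / sin z = y^(1 - k) (y^(2k) - 1) / (y² - 1)`, so with `c = y²` it suffices that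
`(c - 1) ∑ m, ∏ i ≠ m, (c u m - u i) / (u m - u i) = c ^ k - 1`
for distinct nonzero nodes `u`. By Lagrange interpolation the sum is the coefficient of
`X^(k-1)` of the polynomial of degree `< k` taking the values `∏ i ≠ m, (c u m - u i)` at the
nodes. Up to the factor `c - 1` that polynomial is `(∏ i, (c X - u i) - ∏ i, (X - u i)) / X`,
whose coefficient of `X^(k-1)` is `c ^ k - 1`.
-/

open Polynomial Finset

namespace Polynomial

variable {F ι : Type*} [Field F] {s : Finset ι} {v : ι → F}

theorem natDegree_prod_C_mul_X_sub_C_le (c : F) :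
    (∏ j ∈ s, (C c * X - C (v j))).natDegree ≤ #s := by
  refine (natDegree_prod_le _ _).trans ?_
  refine (sum_le_card_nsmul s _ 1 fun j _ => ?_).trans_eq (mul_one #s)
  compute_degree

theorem coeff_card_prod_C_mul_X_sub_C (c : F) :
    (∏ j ∈ s, (C c * X - C (v j))).coeff #s = c ^ #s := by
  have h := coeff_prod_of_natDegree_le (f := fun j => C c * X - C (v j)) (n := 1) s
    fun j _ => by compute_degree
  simpa [coeff_X, coeff_C] using h

end Polynomial

namespace Lagrange

variable {F ι : Type*} [Field F] [DecidableEq ι] {s : Finset ι} {v : ι → F}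

theorem sub_one_mul_sum_prod_mul_sub_div_sub (hvs : Set.InjOn v s) (hv0 : ∀ i ∈ s, v i ≠ 0)
    (c : F) :
    (c - 1) * ∑ i ∈ s, ∏ j ∈ s.erase i, (c * v i - v j) / (v i - v j) = c ^ #s - 1 := by
  obtain rfl | hs := s.eq_empty_or_nonempty
  · simp
  set P := ∏ j ∈ s, (C c * X - C (v j)) - nodal s v
  have hP0 : P.coeff 0 = 0 := by
    simp [P, coeff_zero_eq_eval_zero, eval_prod, eval_nodal]
  have hPX : P.divX * X = P := by simpa [hP0] using divX_mul_X_add P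
  have hdeg : P.divX.degree < #s := by
    refine degree_lt_iff_coeff_zero _ _ |>.mpr fun m hm => ?_
    rw [coeff_divX]
    refine coeff_eq_zero_of_natDegree_lt ((natDegree_sub_le _ _).trans_lt ?_)
    rw [natDegree_nodal, max_lt_iff]
    exact ⟨(natDegree_prod_C_mul_X_sub_C_le c).trans_lt (by omega), by omega⟩
  have heval : ∀ i ∈ s, P.divX.eval (v i) = (c - 1) * ∏ j ∈ s.erase i, (c * v i - v j) := by
    intro i hi
    apply mul_right_cancel₀ (hv0 i hi)
    rw [← eval_mul_X, hPX]
    simp only [P, ← mul_prod_erase s _ hi, eval_sub, eval_mul, eval_C, eval_X, eval_prod,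
      eval_nodal_at_node hi, sub_zero]
    ring
  have hcoeff := coeff_eq_sum hvs hdeg
  have hN : (nodal s v).coeff #s = 1 := by
    simpa [natDegree_nodal] using (nodal_monic (s := s) (v := v)).coeff_natDegree
  rw [coeff_divX, Nat.sub_add_cancel hs.card_pos, coeff_sub, coeff_card_prod_C_mul_X_sub_C,
    hN] at hcoeff
  rw [hcoeff, mul_sum]
  refine sum_congr rfl fun i hi => ?_
  rw [heval i hi, prod_div_distrib, mul_div_assoc]

end Lagrange

namespace Complex

theorem sin_eq_exp_mul_I_sq_sub_one_div (w : ℂ) :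
    sin w = (exp (w * I) ^ 2 - 1) / (2 * I * exp (w * I)) := by
  rw [sin, neg_mul, exp_neg]
  field_simp
  linear_combination (1 - exp (w * I) ^ 2) * I_sq

theorem sin_sub_eq_exp_mul_I_sq_sub_div (a b : ℂ) :
    sin (a - b) = (exp (a * I) ^ 2 - exp (b * I) ^ 2) / (2 * I * exp (a * I) * exp (b * I)) := by
  rw [sin_eq_exp_mul_I_sq_sub_one_div, sub_mul, exp_sub]
  field_simp

theorem sin_sub_add_div_sin_sub (a b z : ℂ) :
    sin (a - b + z) / sin (a - b) = (exp (z * I))⁻¹ *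
      ((exp (z * I) ^ 2 * exp (a * I) ^ 2 - exp (b * I) ^ 2) /
        (exp (a * I) ^ 2 - exp (b * I) ^ 2)) := by
  rw [sin_sub_eq_exp_mul_I_sq_sub_div, sin_eq_exp_mul_I_sq_sub_one_div, add_mul, sub_mul, exp_add,
    exp_sub]
  by_cases h : exp (a * I) ^ 2 - exp (b * I) ^ 2 = 0
  · simp [h]
  field_simp

theorem sin_nat_succ_mul_div_sin (n : ℕ) (z : ℂ) :
    sin ((n + 1 : ℕ) * z) / sin z =
      (exp (z * I))⁻¹ ^ n * (((exp (z * I) ^ 2) ^ (n + 1) - 1) / (exp (z * I) ^ 2 - 1)) := by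
  rw [sin_eq_exp_mul_I_sq_sub_one_div, sin_eq_exp_mul_I_sq_sub_one_div z, mul_assoc, exp_nat_mul,
    inv_pow]
  by_cases h : exp (z * I) ^ 2 - 1 = 0
  · simp [h]
  field_simp
  ring

end Complex

open Complex

theorem sine_sum_identity_general (k : ℕ) (z : ℂ) (hz : Complex.sin z ≠ 0)
    (ξ : Fin k → ℂ) (hξ : ∀ m i : Fin k, m ≠ i → Complex.sin (ξ m - ξ i) ≠ 0) :
    ∑ m : Fin k, ∏ i ∈ Finset.univ.erase m,
        Complex.sin (ξ m - ξ i + z) / Complex.sin (ξ m - ξ i)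
      = Complex.sin ((k : ℂ) * z) / Complex.sin z := by
  obtain _ | n := k
  · simp
  set y := exp (z * I)
  set u : Fin (n + 1) → ℂ := fun m => exp (ξ m * I) ^ 2
  have hy : y ^ 2 - 1 ≠ 0 := fun h => hz (by rw [sin_eq_exp_mul_I_sq_sub_one_div, h, zero_div])
  have hu : Function.Injective u := fun m i h => by
    by_contra hmi
    exact hξ m i hmi (by rw [sin_sub_eq_exp_mul_I_sq_sub_div, sub_eq_zero.mpr h, zero_div])
  calc ∑ m, ∏ i ∈ univ.erase m, sin (ξ m - ξ i + z) / sin (ξ m - ξ i)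
      = ∑ m, ∏ i ∈ univ.erase m, y⁻¹ * ((y ^ 2 * u m - u i) / (u m - u i)) := by
        simp only [sin_sub_add_div_sin_sub, u, y]
    _ = y⁻¹ ^ n * ∑ m, ∏ i ∈ univ.erase m, (y ^ 2 * u m - u i) / (u m - u i) := by
        simp [prod_mul_distrib, mul_sum]
    _ = y⁻¹ ^ n * (((y ^ 2) ^ (n + 1) - 1) / (y ^ 2 - 1)) := by
        congr 1
        rw [eq_div_iff hy, mul_comm, Lagrange.sub_one_mul_sum_prod_mul_sub_div_sub hu.injOn
          fun m _ => pow_ne_zero 2 (exp_ne_zero _), card_univ, Fintype.card_fin]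
    _ = sin ((n + 1 : ℕ) * z) / sin z := (sin_nat_succ_mul_div_sin n z).symm

/-- For a positive integer `k`, `z ∈ ℂ` with `sin z ≠ 0`, and `ξ_1, …, ξ_k ∈ ℂ` with
`sin(ξ_m − ξ_i) ≠ 0` for all `m ≠ i`,
`∑_{m=1}^{k} ∏_{i ≠ m} sin(ξ_m − ξ_i + z)/sin(ξ_m − ξ_i) = sin(kz)/sin(z)`. -/
theorem sine_sum_identity (k : ℕ) (hk : 0 < k) (z : ℂ) (hz : Complex.sin z ≠ 0)
    (ξ : Fin k → ℂ) (hξ : ∀ m i : Fin k, m ≠ i → Complex.sin (ξ m - ξ i) ≠ 0) :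
    ∑ m : Fin k, ∏ i ∈ Finset.univ.erase m,
        Complex.sin (ξ m - ξ i + z) / Complex.sin (ξ m - ξ i)
      = Complex.sin ((k : ℂ) * z) / Complex.sin z :=
  sine_sum_identity_general k z hz ξ hξ
end
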